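/- arXiv:1509.05182 — 8 statements merged into one kernel-verified Lean document; each statement's English description precedes it below -/
import Mathlib

section
/- Suppose 0 < α ≤ 1, 0 ≤ M ≤ N, and q < q₁ := −n + √(n² + α·m²). Then the constant function u*(x) = (√((n+m)/2), 0, √((n−m)/2)) is a global minimizer of ∫_Ω H_TF, and every global minimizer equals u* almost everywhere on Ω. -/
open MeasureTheory

noncomputable section

abbrev E3 := EuclideanSpace ℝ (Fin 3)

/-- The sign `s`: `1` if `α ≥ 0`, `-1` otherwise. -/
def sgn' (α : ℝ) : ℝ := if 0 ≤ α then 1 else -1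

/-- Thomas–Fermi energy density; coordinates: `v 0 = u₁`, `v 1 = u₀`, `v 2 = u₋₁`. -/
def HTF (α q : ℝ) (v : Fin 3 → ℝ) : ℝ :=
  (1/2) * (v 0 ^ 2 + v 1 ^ 2 + v 2 ^ 2) ^ 2
    + (α/2) * (2 * v 1 ^ 2 * (v 0 - sgn' α * v 2) ^ 2 + (v 0 ^ 2 - v 2 ^ 2) ^ 2)
    + q * (v 0 ^ 2 + v 2 ^ 2)

/-- Admissibility: `u ∈ L⁴(Ω; ℝ³)`, nonnegative components a.e. on `Ω`,
with prescribed total mass `N` and total magnetization `M`. -/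
structure Admissible (Ω : Set E3) (N M : ℝ) (u : E3 → Fin 3 → ℝ) : Prop where
  memL4 : MemLp u 4 (volume.restrict Ω)
  nonneg : ∀ᵐ x ∂(volume.restrict Ω), ∀ i, 0 ≤ u x i
  mass : ∫ x in Ω, (u x 0 ^ 2 + u x 1 ^ 2 + u x 2 ^ 2) = N
  mag : ∫ x in Ω, (u x 0 ^ 2 - u x 2 ^ 2) = M

/-- `u` is a global minimizer of `∫_Ω H_TF` among admissible functions. -/
def IsMinimizer (Ω : Set E3) (α q N M : ℝ) (u : E3 → Fin 3 → ℝ) : Prop :=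
  Admissible Ω N M u ∧
    ∀ v : E3 → Fin 3 → ℝ, Admissible Ω N M v →
      ∫ x in Ω, HTF α q (u x) ≤ ∫ x in Ω, HTF α q (v x)

/-!
The multipliers `λ = n + q` and `μ = α m` of the mass and magnetization constraints turn the
problem into a pointwise one: with `ρ = u₁² + u₀² + u₋₁²` and `η = u₁² - u₋₁²`,
`H_TF - λ ρ - μ η + (n² + α m²)/2 = ½ (ρ - n)² + (α/2) (η - m)² + u₀² (α (u₁ - u₋₁)² - q)`.
Where `α (u₁ - u₋₁)² > q` every term is nonnegative and all vanish only at `u*`; where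
`α (u₁ - u₋₁)² ≤ q`, the hypothesis `q < q₁`, i.e. `q² + 2qn < α m²`, makes the right-hand side
strictly positive, through a sum-of-squares certificate. Integrating this pointwise inequality
against the constraints shows that `u*` is a minimizer and that any other minimizer coincides
with it almost everywhere.
-/

namespace ThomasFermi

def density (v : Fin 3 → ℝ) : ℝ := v 0 ^ 2 + v 1 ^ 2 + v 2 ^ 2

def magnetization (v : Fin 3 → ℝ) : ℝ := v 0 ^ 2 - v 2 ^ 2

def lagrangian (α q a b : ℝ) (v : Fin 3 → ℝ) : ℝ :=
  HTF α q v - a * density v - b * magnetization v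

section Algebra

variable {α q n m b x y : ℝ}

lemma sq_add_two_mul_lt_of_add_lt_sqrt {a : ℝ} (hn : 0 ≤ n) (hq : 0 ≤ q)
    (h : q + n < √(n ^ 2 + a)) : q ^ 2 + 2 * q * n < a := by
  have := (Real.lt_sqrt (by positivity)).mp h
  nlinarith

lemma quartic_sos (α q n m b x y : ℝ) :
    4 * q ^ 2 * ((b + (x ^ 2 + y ^ 2) / 2 - n) ^ 2 / 2 + α / 2 * (x * y - m) ^ 2
        + b * (α * x ^ 2 - q))
      = 2 * q ^ 2 * (b + (x ^ 2 + y ^ 2) / 2 - n + α * x ^ 2 - q) ^ 2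
        + 2 * q * (q * y - α * m * x) ^ 2
        + 2 * q * (q - α * x ^ 2) * (α * m ^ 2 - q ^ 2 - 2 * q * n + q * (1 + α) * x ^ 2) := by
  ring

lemma quartic_pos_of_lt (hα : 0 < α) (hq : q ^ 2 + 2 * q * n < α * m ^ 2)
    (hx : α * x ^ 2 < q) :
    0 < (b + (x ^ 2 + y ^ 2) / 2 - n) ^ 2 / 2 + α / 2 * (x * y - m) ^ 2
      + b * (α * x ^ 2 - q) := by
  have hq0 : 0 < q := lt_of_le_of_lt (by positivity) hx
  have hlast : 0 < 2 * q * (q - α * x ^ 2)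
      * (α * m ^ 2 - q ^ 2 - 2 * q * n + q * (1 + α) * x ^ 2) := by
    have : 0 ≤ q * (1 + α) * x ^ 2 := by positivity
    have : 0 < α * m ^ 2 - q ^ 2 - 2 * q * n + q * (1 + α) * x ^ 2 := by linarith
    have : 0 < q - α * x ^ 2 := by linarith
    positivity
  have := quartic_sos α q n m b x y
  nlinarith [sq_nonneg (b + (x ^ 2 + y ^ 2) / 2 - n + α * x ^ 2 - q),
    sq_nonneg (q * y - α * m * x), pow_pos hq0 2]

lemma quartic_pos_of_eq (hα : 0 < α) (hb : 0 ≤ b) (hq : q ^ 2 + 2 * q * n < α * m ^ 2)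
    (hx : α * x ^ 2 = q) :
    0 < (b + (x ^ 2 + y ^ 2) / 2 - n) ^ 2 / 2 + α / 2 * (x * y - m) ^ 2
      + b * (α * x ^ 2 - q) := by
  rw [hx, sub_self, mul_zero, add_zero]
  by_contra! h
  have hsq := sq_nonneg (b + (x ^ 2 + y ^ 2) / 2 - n)
  have hsq' := mul_nonneg hα.le (sq_nonneg (x * y - m))
  have hmass : b + (x ^ 2 + y ^ 2) / 2 - n = 0 := by nlinarith
  have hmag : x * y = m := by
    have : (x * y - m) ^ 2 = 0 := by nlinarith
    exact sub_eq_zero.mp (pow_eq_zero_iff two_ne_zero |>.mp this)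
  -- `q y² = α x² y² = α m² > q² + 2qn`, while the mass relation gives `q y² ≤ 2qn`.
  have hy : α * m ^ 2 = q * y ^ 2 := by rw [← hx, ← hmag]; ring
  have hq0 : 0 ≤ q := hx ▸ by positivity
  nlinarith [mul_nonneg hq0 hb, mul_nonneg hq0 (sq_nonneg x), sq_nonneg q]

theorem quartic_pos (hα : 0 < α) (hn : 0 ≤ n) (hq : q + n < √(n ^ 2 + α * m ^ 2))
    (hb : 0 ≤ b) (hne : ¬(b = 0 ∧ b + (x ^ 2 + y ^ 2) / 2 = n ∧ x * y = m)) :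
    0 < (b + (x ^ 2 + y ^ 2) / 2 - n) ^ 2 / 2 + α / 2 * (x * y - m) ^ 2
      + b * (α * x ^ 2 - q) := by
  rcases lt_or_ge q (α * x ^ 2) with hlt | hle
  · have hmass := sq_nonneg (b + (x ^ 2 + y ^ 2) / 2 - n)
    have hmag := mul_nonneg hα.le (sq_nonneg (x * y - m))
    have hpen : 0 ≤ b * (α * x ^ 2 - q) := mul_nonneg hb (by linarith)
    refine lt_of_le_of_ne (by linarith) fun hK => hne ⟨?_, ?_, ?_⟩
    · exact (mul_eq_zero.mp (by linarith)).resolve_right (sub_pos.mpr hlt).ne'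
    · have : (b + (x ^ 2 + y ^ 2) / 2 - n) ^ 2 = 0 := by linarith
      linarith [pow_eq_zero_iff two_ne_zero |>.mp this]
    · have : α * (x * y - m) ^ 2 = 0 := by linarith
      linarith [pow_eq_zero_iff two_ne_zero |>.mp ((mul_eq_zero.mp this).resolve_left hα.ne')]
  · have hq' := sq_add_two_mul_lt_of_add_lt_sqrt hn (le_trans (by positivity) hle) hq
    rcases hle.lt_or_eq with hlt | heq
    · exact quartic_pos_of_lt hα hq' hlt
    · exact quartic_pos_of_eq hα hb hq' heq

end Algebra

def twoComponent (n m : ℝ) : Fin 3 → ℝ := ![√((n + m) / 2), 0, √((n - m) / 2)]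

section Pointwise

variable {α q n m : ℝ}

lemma lagrangian_add_eq (hα : 0 ≤ α) (v : Fin 3 → ℝ) :
    lagrangian α q (n + q) (α * m) v + (n ^ 2 + α * m ^ 2) / 2
      = (v 1 ^ 2 + ((v 0 - v 2) ^ 2 + (v 0 + v 2) ^ 2) / 2 - n) ^ 2 / 2
        + α / 2 * ((v 0 - v 2) * (v 0 + v 2) - m) ^ 2
        + v 1 ^ 2 * (α * (v 0 - v 2) ^ 2 - q) := by
  simp only [lagrangian, HTF, density, magnetization, sgn', if_pos hα]
  ring

lemma twoComponent_nonneg (n m : ℝ) (i : Fin 3) : 0 ≤ twoComponent n m i := by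
  fin_cases i <;> dsimp [twoComponent] <;> positivity

lemma twoComponent_sq (hmn : |m| ≤ n) :
    twoComponent n m 0 ^ 2 = (n + m) / 2 ∧ twoComponent n m 1 = 0 ∧
      twoComponent n m 2 ^ 2 = (n - m) / 2 := by
  obtain ⟨h, h'⟩ := abs_le.mp hmn
  exact ⟨Real.sq_sqrt (by linarith), rfl, Real.sq_sqrt (by linarith)⟩

lemma density_twoComponent (hmn : |m| ≤ n) : density (twoComponent n m) = n := by
  obtain ⟨h0, h1, h2⟩ := twoComponent_sq hmn
  rw [density, h0, h1, h2]
  ring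

lemma magnetization_twoComponent (hmn : |m| ≤ n) : magnetization (twoComponent n m) = m := by
  obtain ⟨h0, -, h2⟩ := twoComponent_sq hmn
  rw [magnetization, h0, h2]
  ring

lemma lagrangian_twoComponent (hmn : |m| ≤ n) :
    lagrangian α q (n + q) (α * m) (twoComponent n m) = -((n ^ 2 + α * m ^ 2) / 2) := by
  have hρ := density_twoComponent hmn
  obtain ⟨h0, h1, h2⟩ := twoComponent_sq hmn
  rw [lagrangian, hρ, magnetization_twoComponent hmn, HTF, h1, show
    twoComponent n m 0 ^ 2 + 0 ^ 2 + twoComponent n m 2 ^ 2 = n by rw [← h1]; exact hρ, h0, h2]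
  ring

lemma eq_twoComponent {v : Fin 3 → ℝ} (hv : ∀ i, 0 ≤ v i) (h1 : v 1 = 0)
    (hρ : density v = n) (hη : magnetization v = m) : v = twoComponent n m := by
  rw [density, h1] at hρ
  rw [magnetization] at hη
  have e0 : √((n + m) / 2) = v 0 := by
    rw [show (n + m) / 2 = v 0 ^ 2 by linarith, Real.sqrt_sq (hv 0)]
  have e2 : √((n - m) / 2) = v 2 := by
    rw [show (n - m) / 2 = v 2 ^ 2 by linarith, Real.sqrt_sq (hv 2)]
  ext i
  fin_cases i <;> simp [twoComponent, e0, e2, h1]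

theorem lagrangian_twoComponent_lt (hα : 0 < α) (hn : 0 ≤ n) (hmn : |m| ≤ n)
    (hq : q + n < √(n ^ 2 + α * m ^ 2)) {v : Fin 3 → ℝ} (hv : ∀ i, 0 ≤ v i)
    (hne : v ≠ twoComponent n m) :
    lagrangian α q (n + q) (α * m) (twoComponent n m) < lagrangian α q (n + q) (α * m) v := by
  rw [lagrangian_twoComponent hmn, neg_lt_iff_pos_add, lagrangian_add_eq hα.le]
  refine quartic_pos hα hn hq (sq_nonneg _) fun ⟨h1, hρ, hη⟩ => hne (eq_twoComponent hv
    (pow_eq_zero_iff two_ne_zero |>.mp h1) ?_ ?_)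
  · rw [density]
    linear_combination hρ
  · rw [magnetization]
    linear_combination hη

end Pointwise

section Growth

lemma _root_.MeasureTheory.MemLp.integrable_comp_of_abs_le {X E : Type*} [MeasurableSpace X]
    {μ : Measure X} [IsFiniteMeasure μ] [NormedAddCommGroup E] {u : X → E} {p : ℕ}
    (hu : MemLp u p μ)
    {P : E → ℝ} (hP : Continuous P) {C : ℝ} (hC : ∀ v, |P v| ≤ C * (1 + ‖v‖ ^ p)) :
    Integrable (fun x => P (u x)) μ :=
  (((integrable_const 1).add hu.integrable_norm_pow').const_mul C).mono'
    (hP.comp_aestronglyMeasurable hu.aestronglyMeasurable) (ae_of_all _ fun x => hC (u x))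

lemma sq_le_sq_norm {ι : Type*} [Fintype ι] (v : ι → ℝ) (i : ι) : v i ^ 2 ≤ ‖v‖ ^ 2 := by
  rw [← sq_abs]
  exact pow_le_pow_left₀ (abs_nonneg _) (norm_le_pi_norm v i) 2

lemma abs_density_le (v : Fin 3 → ℝ) : |density v| ≤ 3 * (1 + ‖v‖ ^ 4) := by
  have := sq_le_sq_norm v
  unfold density
  rw [abs_of_nonneg (by positivity)]
  nlinarith [this 0, this 1, this 2, sq_nonneg (‖v‖ ^ 2 - 1)]

lemma abs_magnetization_le (v : Fin 3 → ℝ) : |magnetization v| ≤ 1 + ‖v‖ ^ 4 := by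
  have := sq_le_sq_norm v
  rw [magnetization, abs_le]
  constructor <;> nlinarith [this 0, this 2, sq_nonneg (v 0), sq_nonneg (v 2),
    sq_nonneg (‖v‖ ^ 2 - 1)]

lemma sgn'_sq (α : ℝ) : sgn' α ^ 2 = 1 := by
  unfold sgn'
  split_ifs <;> norm_num

lemma abs_HTF_le (α q : ℝ) (v : Fin 3 → ℝ) :
    |HTF α q v| ≤ (5 + 5 * |α| + 2 * |q|) * (1 + ‖v‖ ^ 4) := by
  have hv := sq_le_sq_norm v
  set W := ‖v‖ ^ 2
  have hW : ‖v‖ ^ 4 = W ^ 2 := by ring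
  have h0 := sq_nonneg (v 0)
  have h1 := sq_nonneg (v 1)
  have h2 := sq_nonneg (v 2)
  have hρ : (v 0 ^ 2 + v 1 ^ 2 + v 2 ^ 2) ^ 2 ≤ 9 * W ^ 2 := by
    nlinarith [hv 0, hv 1, hv 2]
  have hdiff : (v 0 - sgn' α * v 2) ^ 2 ≤ 4 * W := by
    nlinarith [hv 0, hv 2, sq_nonneg (v 0 + sgn' α * v 2), sgn'_sq α]
  have hI0 : 0 ≤ 2 * v 1 ^ 2 * (v 0 - sgn' α * v 2) ^ 2 + (v 0 ^ 2 - v 2 ^ 2) ^ 2 := by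
    positivity
  have hI : 2 * v 1 ^ 2 * (v 0 - sgn' α * v 2) ^ 2 + (v 0 ^ 2 - v 2 ^ 2) ^ 2 ≤ 9 * W ^ 2 := by
    nlinarith [hv 0, hv 1, hv 2, mul_le_mul (hv 1) hdiff (sq_nonneg _) (h1.trans (hv 1)),
      mul_nonneg h0 h2]
  have hq : |q * (v 0 ^ 2 + v 2 ^ 2)| ≤ |q| * (2 * (1 + W ^ 2)) := by
    rw [abs_mul, abs_of_nonneg (a := v 0 ^ 2 + v 2 ^ 2) (by positivity)]
    exact mul_le_mul_of_nonneg_left (by nlinarith [hv 0, hv 2, sq_nonneg (W - 1)]) (abs_nonneg q)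
  have hα : |α / 2 * (2 * v 1 ^ 2 * (v 0 - sgn' α * v 2) ^ 2 + (v 0 ^ 2 - v 2 ^ 2) ^ 2)|
      ≤ |α| / 2 * (9 * W ^ 2) := by
    rw [abs_mul, abs_div, abs_two, abs_of_nonneg hI0]
    exact mul_le_mul_of_nonneg_left hI (by positivity)
  rw [HTF, hW]
  refine (abs_add_le _ _).trans ((add_le_add (abs_add_le _ _) hq).trans ?_)
  rw [abs_of_nonneg (by positivity : (0 : ℝ) ≤ 1 / 2 * (v 0 ^ 2 + v 1 ^ 2 + v 2 ^ 2) ^ 2)]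
  nlinarith [abs_nonneg α, abs_nonneg q, sq_nonneg W]

end Growth

section Integral

variable {Ω : Set E3} {α q a b N M : ℝ} {u : E3 → Fin 3 → ℝ} {w : Fin 3 → ℝ}

lemma _root_.Admissible.integrable_HTF_density_magnetization (hΩ : volume Ω ≠ ⊤)
    (hu : Admissible Ω N M u) :
    Integrable (fun x => HTF α q (u x)) (volume.restrict Ω) ∧
      Integrable (fun x => density (u x)) (volume.restrict Ω) ∧
      Integrable (fun x => magnetization (u x)) (volume.restrict Ω) := by
  have := isFiniteMeasure_restrict.mpr hΩ
  exact ⟨hu.memL4.integrable_comp_of_abs_le (by unfold HTF; fun_prop) (abs_HTF_le α q),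
    hu.memL4.integrable_comp_of_abs_le (by unfold density; fun_prop) abs_density_le,
    hu.memL4.integrable_comp_of_abs_le (by unfold magnetization; fun_prop) (C := 1)
      (by simpa using abs_magnetization_le)⟩

lemma _root_.Admissible.integrable_lagrangian (hΩ : volume Ω ≠ ⊤) (hu : Admissible Ω N M u) :
    Integrable (fun x => lagrangian α q a b (u x)) (volume.restrict Ω) :=
  let ⟨hHTF, hρ, hη⟩ := hu.integrable_HTF_density_magnetization (α := α) (q := q) hΩ
  (hHTF.sub (hρ.const_mul a)).sub (hη.const_mul b)

lemma _root_.Admissible.integral_lagrangian (hΩ : volume Ω ≠ ⊤) (hu : Admissible Ω N M u) :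
    ∫ x in Ω, lagrangian α q a b (u x) = (∫ x in Ω, HTF α q (u x)) - a * N - b * M := by
  obtain ⟨hHTF, hρ, hη⟩ := hu.integrable_HTF_density_magnetization (α := α) (q := q) hΩ
  have hHTFρ : Integrable (fun x => HTF α q (u x) - a * density (u x)) (volume.restrict Ω) :=
    hHTF.sub (hρ.const_mul a)
  simp only [lagrangian]
  rw [integral_sub hHTFρ (hη.const_mul b), integral_sub hHTF (hρ.const_mul a),
    integral_const_mul, integral_const_mul, show ∫ x in Ω, density (u x) = N from hu.mass,
    show ∫ x in Ω, magnetization (u x) = M from hu.mag]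

lemma admissible_const (hΩ : volume Ω ≠ ⊤) (hw : ∀ i, 0 ≤ w i) :
    Admissible Ω ((volume Ω).toReal * density w) ((volume Ω).toReal * magnetization w)
      (fun _ => w) := by
  have := isFiniteMeasure_restrict.mpr hΩ
  refine ⟨memLp_const w, ae_of_all _ fun _ => hw, ?_, ?_⟩ <;>
    simp only [setIntegral_const, smul_eq_mul, measureReal_def, density, magnetization]

lemma _root_.Admissible.integral_lagrangian_const (hΩ : volume Ω ≠ ⊤)
    (hw : Admissible Ω N M (fun _ => w)) :
    ∫ _ in Ω, lagrangian α q a b w = (∫ _ in Ω, HTF α q w) - a * N - b * M :=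
  hw.integral_lagrangian hΩ

theorem isMinimizer_const_of_lagrangian_le (hΩ : volume Ω ≠ ⊤)
    (hw : Admissible Ω N M (fun _ => w))
    (hmin : ∀ v, (∀ i, 0 ≤ v i) → lagrangian α q a b w ≤ lagrangian α q a b v) :
    IsMinimizer Ω α q N M (fun _ => w) := by
  have := isFiniteMeasure_restrict.mpr hΩ
  refine ⟨hw, fun v hv => ?_⟩
  have h := integral_mono_ae (integrable_const _) (hv.integrable_lagrangian hΩ)
    (hv.nonneg.mono fun x hx => hmin _ hx)
  rw [hw.integral_lagrangian_const hΩ, hv.integral_lagrangian hΩ] at h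
  linarith

theorem ae_eq_of_isMinimizer (hΩ : volume Ω ≠ ⊤) (hw : Admissible Ω N M (fun _ => w))
    (hmin : ∀ v, (∀ i, 0 ≤ v i) → v ≠ w → lagrangian α q a b w < lagrangian α q a b v)
    (hu : IsMinimizer Ω α q N M u) :
    ∀ᵐ x ∂(volume.restrict Ω), u x = w := by
  have := isFiniteMeasure_restrict.mpr hΩ
  have hgap : 0 ≤ᵐ[volume.restrict Ω] fun x => lagrangian α q a b (u x) - lagrangian α q a b w := by
    filter_upwards [hu.1.nonneg] with x hx
    rcases eq_or_ne (u x) w with h | h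
    · simp [h]
    · exact sub_nonneg.mpr (hmin _ hx h).le
  have hint := (hu.1.integrable_lagrangian (α := α) (q := q) (a := a) (b := b) hΩ).sub
    (integrable_const (lagrangian α q a b w))
  have hzero : ∫ x in Ω, (lagrangian α q a b (u x) - lagrangian α q a b w) = 0 := by
    refine le_antisymm ?_ (integral_nonneg_of_ae hgap)
    rw [integral_sub (hu.1.integrable_lagrangian hΩ) (integrable_const _),
      hw.integral_lagrangian_const hΩ, hu.1.integral_lagrangian hΩ]
    linarith [hu.2 _ hw]
  filter_upwards [(integral_eq_zero_iff_of_nonneg_ae hgap hint).mp hzero, hu.1.nonneg]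
    with x hx hnn
  by_contra hne
  exact (hmin _ hnn hne).ne' (sub_eq_zero.mp hx)

end Integral

end ThomasFermi

open ThomasFermi in
theorem antiferro_2C_general
    (Ω : Set E3) (hΩb : Bornology.IsBounded Ω)
    (hΩpos : 0 < volume Ω)
    (α q N M n m : ℝ)
    (hα0 : 0 < α) (hN : 0 < N) (hM0 : 0 ≤ M) (hMN : M ≤ N)
    (hn : n = N / (volume Ω).toReal) (hm : m = M / (volume Ω).toReal)
    (hq : q < -n + Real.sqrt (n ^ 2 + α * m ^ 2))
    (ustar : Fin 3 → ℝ)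
    (hustar : ustar = ![Real.sqrt ((n + m) / 2), 0, Real.sqrt ((n - m) / 2)]) :
    IsMinimizer Ω α q N M (fun _ => ustar) ∧
      ∀ u : E3 → Fin 3 → ℝ, IsMinimizer Ω α q N M u →
        ∀ᵐ x ∂(volume.restrict Ω), u x = ustar := by
  obtain rfl : ustar = twoComponent n m := hustar
  have hΩ : volume Ω ≠ ⊤ := hΩb.measure_lt_top.ne
  have hT : (volume Ω).toReal ≠ 0 := (ENNReal.toReal_pos hΩpos.ne' hΩ).ne'
  have hn0 : 0 ≤ n := hn ▸ by positivity
  have hmn : |m| ≤ n := by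
    rw [abs_of_nonneg (hm ▸ by positivity), hm, hn]
    gcongr
  have hadm : Admissible Ω N M (fun _ => twoComponent n m) := by
    have h := admissible_const hΩ (twoComponent_nonneg n m)
    rwa [density_twoComponent hmn, magnetization_twoComponent hmn, hn, hm,
      mul_div_cancel₀ _ hT, mul_div_cancel₀ _ hT, ← hn, ← hm] at h
  have hlt : ∀ v, (∀ i, 0 ≤ v i) → v ≠ twoComponent n m →
      lagrangian α q (n + q) (α * m) (twoComponent n m) < lagrangian α q (n + q) (α * m) v :=
    fun v hv hne => lagrangian_twoComponent_lt hα0 hn0 hmn (by linarith) hv hne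
  have hle : ∀ v, (∀ i, 0 ≤ v i) →
      lagrangian α q (n + q) (α * m) (twoComponent n m) ≤ lagrangian α q (n + q) (α * m) v :=
    fun v hv => (eq_or_ne v (twoComponent n m)).elim (fun h => h ▸ le_rfl) fun h => (hlt v hv h).le
  exact ⟨isMinimizer_const_of_lagrangian_le hΩ hadm hle,
    fun u hu => ae_eq_of_isMinimizer hΩ hadm hlt hu⟩

/-- Antiferromagnetic case `q < q₁`: the unique minimizer is the `2C` pure state. -/
theorem antiferro_2C
    (Ω : Set E3) (hΩm : MeasurableSet Ω) (hΩb : Bornology.IsBounded Ω)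
    (hΩpos : 0 < volume Ω)
    (α q N M n m : ℝ)
    (hα0 : 0 < α) (hα1 : α ≤ 1) (hN : 0 < N) (hM0 : 0 ≤ M) (hMN : M ≤ N)
    (hn : n = N / (volume Ω).toReal) (hm : m = M / (volume Ω).toReal)
    (hq : q < -n + Real.sqrt (n ^ 2 + α * m ^ 2))
    (ustar : Fin 3 → ℝ)
    (hustar : ustar = ![Real.sqrt ((n + m) / 2), 0, Real.sqrt ((n - m) / 2)]) :
    IsMinimizer Ω α q N M (fun _ => ustar) ∧
      ∀ u : E3 → Fin 3 → ℝ, IsMinimizer Ω α q N M u →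
        ∀ᵐ x ∂(volume.restrict Ω), u x = ustar :=
  antiferro_2C_general Ω hΩb hΩpos α q N M n m hα0 hN hM0 hMN hn hm hq ustar hustar
end
end

section
/- Suppose 0 < α ≤ 1, M = 0, and 0 < q < q₂ := (1 − (α+1)^(−1/2))·n. Then the constant function u*(x) = (0, √n, 0) is a global minimizer of ∫_Ω H_TF, and every global minimizer equals u* almost everywhere on Ω. -/
open MeasureTheory

noncomputable section

/-! With `ρ = u₁² + u₀² + u₋₁²`, the quartic term alone forces the bound: `ρ²/2 ≥ n ρ - n²/2`
pointwise (tangent line at `ρ = n`), and every other term of `H_TF` is nonnegative when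
`α ≥ 0, q ≥ 0`. Integrating with `∫ ρ = N = n |Ω|` gives `∫ H_TF ≥ n² |Ω| / 2`, which is the
energy of the constant state `(0, √n, 0)`. A minimizer therefore saturates the pointwise
inequality a.e.; for `q > 0` this forces `u₁ = u₋₁ = 0` and `u₀² = n`. -/

def massDensity (v : Fin 3 → ℝ) : ℝ := v 0 ^ 2 + v 1 ^ 2 + v 2 ^ 2

lemma continuous_massDensity : Continuous massDensity := by unfold massDensity; fun_prop

lemma massDensity_le_three_mul_norm_sq (v : Fin 3 → ℝ) : massDensity v ≤ 3 * ‖v‖ ^ 2 := by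
  have h (i : Fin 3) : v i ^ 2 ≤ ‖v‖ ^ 2 := by
    simpa only [Real.norm_eq_abs, sq_abs] using
      pow_le_pow_left₀ (norm_nonneg _) (norm_le_pi_norm v i) 2
  unfold massDensity
  linarith [h 0, h 1, h 2]

section Pointwise

variable {α q : ℝ}

lemma sgn'_of_nonneg (hα : 0 ≤ α) : sgn' α = 1 := if_pos hα

lemma continuous_HTF : Continuous (HTF α q) := by unfold HTF; fun_prop

lemma HTF_eq_of_nonneg (hα : 0 ≤ α) (v : Fin 3 → ℝ) :
    HTF α q v = massDensity v ^ 2 / 2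
      + α / 2 * (2 * (v 1 * (v 0 - v 2)) ^ 2 + (v 0 ^ 2 - v 2 ^ 2) ^ 2)
      + q * (v 0 ^ 2 + v 2 ^ 2) := by
  rw [HTF, sgn'_of_nonneg hα, massDensity]
  ring

lemma HTF_nonneg (hα : 0 ≤ α) (hq : 0 ≤ q) (v : Fin 3 → ℝ) : 0 ≤ HTF α q v := by
  rw [HTF_eq_of_nonneg hα]
  positivity

lemma HTF_le_massDensity (hα : 0 ≤ α) (hq : 0 ≤ q) (v : Fin 3 → ℝ) :
    HTF α q v ≤ (1 + 5 * α) / 2 * massDensity v ^ 2 + q * massDensity v := by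
  have h02 : v 0 ^ 2 + v 2 ^ 2 ≤ massDensity v := by
    unfold massDensity; linarith [sq_nonneg (v 1)]
  have hcross : (v 1 * (v 0 - v 2)) ^ 2 ≤ massDensity v ^ 2 := by
    unfold massDensity
    nlinarith [sq_nonneg (v 0 + v 2), sq_nonneg (v 1 ^ 2 - v 0 ^ 2 - v 2 ^ 2), sq_nonneg (v 1),
      mul_nonneg (sq_nonneg (v 1)) (sq_nonneg (v 0 + v 2))]
  have hdiff : (v 0 ^ 2 - v 2 ^ 2) ^ 2 ≤ massDensity v ^ 2 := by
    unfold massDensity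
    nlinarith [sq_nonneg (v 0), sq_nonneg (v 1), sq_nonneg (v 2),
      mul_nonneg (sq_nonneg (v 0)) (sq_nonneg (v 2))]
  rw [HTF_eq_of_nonneg hα]
  nlinarith [mul_le_mul_of_nonneg_left hcross hα, mul_le_mul_of_nonneg_left hdiff hα,
    mul_le_mul_of_nonneg_left h02 hq]

lemma abs_HTF_le (hα : 0 ≤ α) (hq : 0 ≤ q) (v : Fin 3 → ℝ) :
    |HTF α q v| ≤ (9 * (1 + 5 * α) / 2 + 3 * q) * (‖v‖ ^ 4 + 1) := by
  have hρ := massDensity_le_three_mul_norm_sq v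
  have hρ0 : 0 ≤ massDensity v := by unfold massDensity; positivity
  have hsq : massDensity v ^ 2 ≤ 9 * ‖v‖ ^ 4 := by nlinarith
  have hlin : massDensity v ≤ 3 * (‖v‖ ^ 4 + 1) := by nlinarith [sq_nonneg (‖v‖ ^ 2 - 1)]
  rw [abs_of_nonneg (HTF_nonneg hα hq v)]
  nlinarith [HTF_le_massDensity hα hq v,
    mul_le_mul_of_nonneg_left hsq (by positivity : 0 ≤ (1 + 5 * α) / 2),
    mul_le_mul_of_nonneg_left hlin hq, mul_nonneg hα (by positivity : (0 : ℝ) ≤ ‖v‖ ^ 4 + 1)]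

lemma abs_massDensity_le (v : Fin 3 → ℝ) : |massDensity v| ≤ 3 * (‖v‖ ^ 4 + 1) := by
  have hρ := massDensity_le_three_mul_norm_sq v
  rw [abs_of_nonneg (by unfold massDensity; positivity)]
  nlinarith [sq_nonneg (‖v‖ ^ 2 - 1)]

lemma tangent_le_HTF (hα : 0 ≤ α) (hq : 0 ≤ q) (n : ℝ) (v : Fin 3 → ℝ) :
    n * massDensity v - n ^ 2 / 2 ≤ HTF α q v := by
  rw [HTF_eq_of_nonneg hα]
  nlinarith [sq_nonneg (massDensity v - n), mul_nonneg hα (sq_nonneg (v 1 * (v 0 - v 2))),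
    mul_nonneg hα (sq_nonneg (v 0 ^ 2 - v 2 ^ 2)),
    mul_nonneg hq (add_nonneg (sq_nonneg (v 0)) (sq_nonneg (v 2)))]

lemma eq_nematic_of_HTF_le_tangent (hα : 0 ≤ α) (hq : 0 < q) {n : ℝ} {v : Fin 3 → ℝ}
    (hv : 0 ≤ v 1) (h : HTF α q v ≤ n * massDensity v - n ^ 2 / 2) :
    v = ![0, Real.sqrt n, 0] := by
  rw [HTF_eq_of_nonneg hα] at h
  have hanisotropy : 0 ≤ α / 2 * (2 * (v 1 * (v 0 - v 2)) ^ 2 + (v 0 ^ 2 - v 2 ^ 2) ^ 2) := by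
    positivity
  have h02 : v 0 ^ 2 + v 2 ^ 2 = 0 := by
    by_contra hne
    have hpos : 0 < v 0 ^ 2 + v 2 ^ 2 := lt_of_le_of_ne (by positivity) (Ne.symm hne)
    nlinarith [sq_nonneg (massDensity v - n), mul_pos hq hpos]
  have h0 : v 0 = 0 := by nlinarith [sq_nonneg (v 0), sq_nonneg (v 2)]
  have h2 : v 2 = 0 := by nlinarith [sq_nonneg (v 0), sq_nonneg (v 2)]
  have h1 : v 1 ^ 2 = n := by
    rw [massDensity, h0, h2] at h
    nlinarith [sq_nonneg (v 1 ^ 2 - n)]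
  ext i
  fin_cases i <;> simp [h0, h2, ← h1, Real.sqrt_sq hv]

end Pointwise

lemma MemLp.integrable_comp_of_abs_le {X E : Type*} [MeasurableSpace X] [NormedAddCommGroup E]
    {μ : Measure X} [IsFiniteMeasure μ] {u : X → E} {k : ℕ} (hu : MemLp u k μ)
    {f : E → ℝ} (hf : Continuous f) {C : ℝ} (hb : ∀ w, |f w| ≤ C * (‖w‖ ^ k + 1)) :
    Integrable (fun x => f (u x)) μ :=
  (((hu.integrable_norm_pow').add (integrable_const 1)).const_mul C).mono'
    (hf.comp_aestronglyMeasurable hu.1) (Filter.Eventually.of_forall fun x => hb (u x))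

namespace Admissible

variable {Ω : Set E3} {N M : ℝ} {v : E3 → Fin 3 → ℝ} [IsFiniteMeasure (volume.restrict Ω)]

lemma integrable_massDensity (hv : Admissible Ω N M v) :
    Integrable (fun x => massDensity (v x)) (volume.restrict Ω) :=
  MemLp.integrable_comp_of_abs_le (k := 4) (by exact_mod_cast hv.memL4) continuous_massDensity
    abs_massDensity_le

lemma integrable_HTF {α q : ℝ} (hα : 0 ≤ α) (hq : 0 ≤ q) (hv : Admissible Ω N M v) :
    Integrable (fun x => HTF α q (v x)) (volume.restrict Ω) :=
  MemLp.integrable_comp_of_abs_le (k := 4) (by exact_mod_cast hv.memL4) continuous_HTF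
    (abs_HTF_le hα hq)

lemma integrable_tangent (hv : Admissible Ω N M v) (n : ℝ) :
    Integrable (fun x => n * massDensity (v x) - n ^ 2 / 2) (volume.restrict Ω) :=
  (hv.integrable_massDensity.const_mul n).sub (integrable_const _)

lemma integral_tangent (hv : Admissible Ω N M v) (n : ℝ) :
    ∫ x in Ω, (n * massDensity (v x) - n ^ 2 / 2) = n * N - n ^ 2 / 2 * volume.real Ω := by
  rw [integral_sub (hv.integrable_massDensity.const_mul n) (integrable_const _),
    integral_const_mul, setIntegral_const, smul_eq_mul, mul_comm (volume.real Ω)]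
  exact congrArg (fun I => n * I - _) hv.mass

lemma tangent_le_integral_HTF {α q : ℝ} (hα : 0 ≤ α) (hq : 0 ≤ q) (hv : Admissible Ω N M v)
    (n : ℝ) : n * N - n ^ 2 / 2 * volume.real Ω ≤ ∫ x in Ω, HTF α q (v x) := by
  rw [← hv.integral_tangent n]
  exact integral_mono (hv.integrable_tangent n) (hv.integrable_HTF hα hq)
    fun x => tangent_le_HTF hα hq n (v x)

lemma ae_eq_nematic_of_integral_HTF_le {α q : ℝ} (hα : 0 ≤ α) (hq : 0 < q)
    (hv : Admissible Ω N M v) {n : ℝ}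
    (h : ∫ x in Ω, HTF α q (v x) ≤ n * N - n ^ 2 / 2 * volume.real Ω) :
    ∀ᵐ x ∂(volume.restrict Ω), v x = ![0, Real.sqrt n, 0] := by
  set gap : E3 → ℝ := fun x => HTF α q (v x) - (n * massDensity (v x) - n ^ 2 / 2)
  have hgap_int : Integrable gap (volume.restrict Ω) :=
    (hv.integrable_HTF hα hq.le).sub (hv.integrable_tangent n)
  have hgap_nonneg : 0 ≤ᵐ[volume.restrict Ω] gap :=
    Filter.Eventually.of_forall fun x => sub_nonneg.mpr (tangent_le_HTF hα hq.le n (v x))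
  have hgap_zero : ∫ x in Ω, gap x = 0 := by
    refine le_antisymm ?_ (integral_nonneg_of_ae hgap_nonneg)
    simp only [gap]
    rw [integral_sub (hv.integrable_HTF hα hq.le) (hv.integrable_tangent n), hv.integral_tangent n]
    linarith
  filter_upwards [(integral_eq_zero_iff_of_nonneg_ae hgap_nonneg hgap_int).mp hgap_zero,
    hv.nonneg] with x hx hvx
  exact eq_nematic_of_HTF_le_tangent hα hq (hvx 1) (sub_eq_zero.mp hx).le

end Admissible

lemma admissible_nematic {Ω : Set E3} [IsFiniteMeasure (volume.restrict Ω)] {n : ℝ}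
    (hn : 0 ≤ n) :
    Admissible Ω (n * volume.real Ω) 0 (fun _ => ![0, Real.sqrt n, 0]) where
  memL4 := memLp_const _
  nonneg := Filter.Eventually.of_forall fun _ i => by
    fin_cases i <;> simp [Real.sqrt_nonneg]
  mass := by simp [Real.sq_sqrt hn, mul_comm]
  mag := by simp

lemma integral_HTF_nematic {Ω : Set E3} {α q n : ℝ} (hα : 0 ≤ α) (hn : 0 ≤ n) :
    ∫ _ in Ω, HTF α q ![0, Real.sqrt n, 0] = n ^ 2 / 2 * volume.real Ω := by
  rw [setIntegral_const, smul_eq_mul, HTF_eq_of_nonneg hα]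
  simp [massDensity, Real.sq_sqrt hn, mul_comm]

theorem antiferro_NS_m0_general
    (Ω : Set E3) (hΩb : Bornology.IsBounded Ω)
    (hΩpos : 0 < volume Ω)
    (α q N n : ℝ)
    (hα0 : 0 < α) (hN : 0 < N)
    (hn : n = N / (volume Ω).toReal)
    (hq0 : 0 < q)
    (ustar : Fin 3 → ℝ) (hustar : ustar = ![0, Real.sqrt n, 0]) :
    IsMinimizer Ω α q N 0 (fun _ => ustar) ∧
      ∀ u : E3 → Fin 3 → ℝ, IsMinimizer Ω α q N 0 u →
        ∀ᵐ x ∂(volume.restrict Ω), u x = ustar := by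
  subst hustar
  have hΩfin : volume Ω ≠ ⊤ := hΩb.measure_lt_top.ne
  have : IsFiniteMeasure (volume.restrict Ω) := isFiniteMeasure_restrict.mpr hΩfin
  have hvol : 0 < volume.real Ω := ENNReal.toReal_pos hΩpos.ne' hΩfin
  have hN_eq : N = n * volume.real Ω := by rw [hn]; exact (div_mul_cancel₀ N hvol.ne').symm
  have hn0 : 0 ≤ n := by rw [hn]; positivity
  have hadm : Admissible Ω N 0 (fun _ => ![0, Real.sqrt n, 0]) := hN_eq ▸ admissible_nematic hn0
  have henergy : ∫ _ in Ω, HTF α q ![0, Real.sqrt n, 0] = n * N - n ^ 2 / 2 * volume.real Ω := by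
    rw [integral_HTF_nematic hα0.le hn0, hN_eq]
    ring
  refine ⟨⟨hadm, fun v hv => henergy ▸ hv.tangent_le_integral_HTF hα0.le hq0.le n⟩,
    fun u hu => hu.1.ae_eq_nematic_of_integral_HTF_le hα0.le hq0 ?_⟩
  exact henergy ▸ hu.2 _ hadm

/-- Antiferromagnetic case `m = 0`, `0 < q < q₂`: the unique minimizer is the nematic state. -/
theorem antiferro_NS_m0
    (Ω : Set E3) (hΩm : MeasurableSet Ω) (hΩb : Bornology.IsBounded Ω)
    (hΩpos : 0 < volume Ω)
    (α q N n : ℝ)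
    (hα0 : 0 < α) (hα1 : α ≤ 1) (hN : 0 < N)
    (hn : n = N / (volume Ω).toReal)
    (hq0 : 0 < q) (hq2 : q < (1 - 1 / Real.sqrt (α + 1)) * n)
    (ustar : Fin 3 → ℝ) (hustar : ustar = ![0, Real.sqrt n, 0]) :
    IsMinimizer Ω α q N 0 (fun _ => ustar) ∧
      ∀ u : E3 → Fin 3 → ℝ, IsMinimizer Ω α q N 0 u →
        ∀ᵐ x ∂(volume.restrict Ω), u x = ustar :=
  antiferro_NS_m0_general Ω hΩb hΩpos α q N n hα0 hN hn hq0 ustar hustar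
end
end

section
/- Let −1 < α < 0, n > 0, 0 ≤ m < n, q > 0, and assume q² + 2αqn ≥ 0. Then the cubic polynomial g(b) = b³ − (q² + 2αqn)·b + 2αq²·m is strictly increasing on the interval [√(q² + 2αqn), q] and has exactly one root in that interval. -/
/-- The cubic `g(b) = b³ − (q² + 2αqn)b + 2αq²m` is strictly increasing on
`[√(q² + 2αqn), q]` and has exactly one root there. -/
theorem cubic_unique_root
    (α n m q : ℝ)
    (hαl : -1 < α) (hαu : α < 0) (hn : 0 < n) (hm0 : 0 ≤ m) (hmn : m < n)
    (hq : 0 < q) (hdisc : 0 ≤ q ^ 2 + 2 * α * q * n) :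
    StrictMonoOn (fun b : ℝ => b ^ 3 - (q ^ 2 + 2 * α * q * n) * b + 2 * α * q ^ 2 * m)
        (Set.Icc (Real.sqrt (q ^ 2 + 2 * α * q * n)) q) ∧
      ∃! b : ℝ, b ∈ Set.Icc (Real.sqrt (q ^ 2 + 2 * α * q * n)) q ∧
        b ^ 3 - (q ^ 2 + 2 * α * q * n) * b + 2 * α * q ^ 2 * m = 0 := by
  set D := q ^ 2 + 2 * α * q * n with hD
  have hs0 : 0 ≤ Real.sqrt D := Real.sqrt_nonneg D
  have hsq : Real.sqrt D ^ 2 = D := Real.sq_sqrt hdisc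
  have hsle : Real.sqrt D ≤ q := by
    have : Real.sqrt D ≤ Real.sqrt (q ^ 2) := Real.sqrt_le_sqrt (by nlinarith [hD, mul_pos hq hn])
    rwa [Real.sqrt_sq hq.le] at this
  have hmono : StrictMonoOn (fun b : ℝ => b ^ 3 - D * b + 2 * α * q ^ 2 * m)
      (Set.Icc (Real.sqrt D) q) := by
    intro x hx y hy hxy
    simp only
    have hx0 : 0 ≤ x := le_trans hs0 hx.1
    have hDx : D ≤ x ^ 2 := by nlinarith [hx.1]
    nlinarith [mul_pos (sub_pos.2 hxy) (sub_pos.2 hxy), sq_nonneg (x + y)]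
  refine ⟨hmono, ?_⟩
  have hcont : ContinuousOn (fun b : ℝ => b ^ 3 - D * b + 2 * α * q ^ 2 * m)
      (Set.Icc (Real.sqrt D) q) := by fun_prop
  have hgs : (fun b : ℝ => b ^ 3 - D * b + 2 * α * q ^ 2 * m) (Real.sqrt D) ≤ 0 := by
    simp only
    nlinarith [hsq, hs0, mul_nonneg hm0 (sq_nonneg q)]
  have hgq : 0 ≤ (fun b : ℝ => b ^ 3 - D * b + 2 * α * q ^ 2 * m) q := by
    simp only
    nlinarith [hD, mul_pos (mul_pos hq hq) (sub_pos.2 hmn)]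
  obtain ⟨b, hb, hb0⟩ := intermediate_value_Icc hsle hcont ⟨hgs, hgq⟩
  exact ⟨b, ⟨hb, hb0⟩, fun c hc => hmono.injOn hc.1 hb (hc.2.trans hb0.symm)⟩
end

section
/- Let 0 < α ≤ 1, n > 0, 0 < m ≤ n, and let q be a real number with q₁ < q < q₂, where q₁ := −n + √(n² + α·m²) and q₂ := (1 − (α+1)^(−1/2))·(n + ((α+1)^(1/2) − 1)·m). Then there exists exactly one r ∈ (0,1) such that 2q²r³ + (2qn − q²)r² − α·m² = 0 and m/r ≤ n + (r−1)·q. -/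
/-!
Write `F r = 2 q² r³ + (2 q n - q²) r² - α m²` and `g r = q r² + (n - q) r - m`, so that the
constraint `m / r ≤ n + (r - 1) q` is `g r ≥ 0` and `F r = 2 q r · g r + (q r + m)² - (α + 1) m²`.
The lower threshold `q₁ < q` says `q > 0` and `F 1 > 0`; the upper threshold `q < q₂` says `q < n`
and `g t > 0` for `t = (√(α + 1) - 1) m / q`. Then `F` is increasing on `[0, ∞)`, so it has exactly
one root `r` in `(0, 1)`. If `g r < 0`, the identity forces `q r + m > √(α + 1) m`, i.e. `r > t`,
and then `g r > g t > 0` because `g` is increasing on `[0, ∞)` as well.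
-/

open Set

section Cubic

variable {a b d : ℝ}

lemma strictMonoOn_cubic (ha : 0 < a) (hb : 0 ≤ b) :
    StrictMonoOn (fun x : ℝ => a * x ^ 3 + b * x ^ 2 - d) (Ici 0) := by
  intro x hx y _ hxy
  have h3 : x ^ 3 < y ^ 3 := pow_lt_pow_left₀ hxy hx (by norm_num)
  have h2 : x ^ 2 ≤ y ^ 2 := pow_le_pow_left₀ hx hxy.le 2
  dsimp only
  linarith [mul_lt_mul_of_pos_left h3 ha, mul_le_mul_of_nonneg_left h2 hb]

lemma exists_cubic_root_mem_Ioo (hd : 0 < d) (h1 : d < a + b) :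
    ∃ x ∈ Ioo (0 : ℝ) 1, a * x ^ 3 + b * x ^ 2 - d = 0 := by
  have hcont : ContinuousOn (fun x : ℝ => a * x ^ 3 + b * x ^ 2 - d) (Icc 0 1) := by fun_prop
  exact intermediate_value_Ioo zero_le_one hcont ⟨by simpa using hd, by simpa using h1⟩

end Cubic

section LowerThreshold

variable {n d q : ℝ}

lemma pos_of_neg_add_sqrt_lt (hd : 0 < d) (hq : -n + Real.sqrt (n ^ 2 + d) < q) : 0 < q := by
  have : n < Real.sqrt (n ^ 2 + d) := Real.lt_sqrt_of_sq_lt (by linarith)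
  linarith

lemma lt_sq_add_of_neg_add_sqrt_lt (hq : -n + Real.sqrt (n ^ 2 + d) < q) :
    d < q ^ 2 + 2 * q * n := by
  have hpos : 0 < q + n := by linarith [Real.sqrt_nonneg (n ^ 2 + d)]
  have := (Real.sqrt_lt' hpos).1 (by linarith)
  linarith

end LowerThreshold

def admissibilityMargin (n m q r : ℝ) : ℝ := q * r ^ 2 + (n - q) * r - m

section VolumeFraction

variable {α n m q s : ℝ}

lemma div_le_iff_admissibilityMargin_nonneg {r : ℝ} (hr : 0 < r) :
    m / r ≤ n + (r - 1) * q ↔ 0 ≤ admissibilityMargin n m q r := by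
  rw [div_le_iff₀ hr, admissibilityMargin]
  constructor <;> intro h <;> linarith

lemma lt_of_upper_threshold (hs1 : 1 ≤ s) (hs2 : s ≤ 2) (hm : 0 ≤ m) (hmn : m ≤ n)
    (hq : q < (1 - 1 / s) * (n + (s - 1) * m)) : q < n :=
  calc q < (1 - 1 / s) * (n + (s - 1) * m) := hq
    _ ≤ (1 / 2) * (n + n) := by
      have hfactor : 1 - 1 / s ≤ 1 / 2 := by
        linarith [one_div_le_one_div_of_le (by linarith) hs2]
      have hmn' : (s - 1) * m ≤ n := (mul_le_of_le_one_left hm (by linarith)).trans hmn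
      gcongr
      linarith [mul_nonneg (by linarith : (0 : ℝ) ≤ s - 1) hm]
    _ = n := by ring

lemma admissibilityMargin_pos_of_upper_threshold (hq0 : 0 < q) (hm : 0 < m) (hs : 0 < s)
    (hq : q < (1 - 1 / s) * (n + (s - 1) * m)) :
    0 < admissibilityMargin n m q ((s - 1) * m / q) := by
  have hqs : q * s < (s - 1) * (n + (s - 1) * m) := by
    rwa [one_sub_div hs.ne', div_mul_eq_mul_div, lt_div_iff₀ hs] at hq
  have hval : admissibilityMargin n m q ((s - 1) * m / q)
      = m / q * ((s - 1) * (n + (s - 1) * m) - q * s) := by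
    rw [admissibilityMargin]
    field_simp
    ring
  rw [hval]
  exact mul_pos (div_pos hm hq0) (by linarith)

lemma admissibilityMargin_nonneg_of_root {r : ℝ} (hq0 : 0 < q) (hqn : q ≤ n) (hm : 0 ≤ m)
    (hs1 : 1 ≤ s) (hs2 : s ^ 2 = α + 1)
    (ht : 0 < admissibilityMargin n m q ((s - 1) * m / q)) (hr : 0 < r)
    (hroot : 2 * q ^ 2 * r ^ 3 + (2 * q * n - q ^ 2) * r ^ 2 - α * m ^ 2 = 0) :
    0 ≤ admissibilityMargin n m q r := by
  by_contra! h
  have hsq : (s * m) ^ 2 < (q * r + m) ^ 2 := by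
    have hid : (q * r + m) ^ 2 - (s * m) ^ 2 = -(2 * q * r) * admissibilityMargin n m q r := by
      rw [admissibilityMargin]
      linear_combination hroot - m ^ 2 * hs2
    nlinarith [mul_pos (mul_pos hq0 hr) (neg_pos.2 h)]
  have hlt : s * m < q * r + m :=
    (pow_lt_pow_iff_left₀ (by positivity) (by positivity) two_ne_zero).1 hsq
  have htr : (s - 1) * m / q < r := by
    rw [div_lt_iff₀ hq0]
    linarith
  have hmono : admissibilityMargin n m q ((s - 1) * m / q) ≤ admissibilityMargin n m q r := by
    have ht0 : 0 ≤ (s - 1) * m / q := div_nonneg (mul_nonneg (by linarith) hm) hq0.le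
    have hnq : 0 ≤ n - q := by linarith
    unfold admissibilityMargin
    gcongr
  linarith

end VolumeFraction

theorem unique_volume_fraction_general
    (α n m q : ℝ)
    (hα0 : 0 < α) (hα1 : α ≤ 1) (hm0 : 0 < m) (hmn : m ≤ n)
    (hq1 : -n + Real.sqrt (n ^ 2 + α * m ^ 2) < q)
    (hq2 : q < (1 - 1 / Real.sqrt (α + 1)) * (n + (Real.sqrt (α + 1) - 1) * m)) :
    ∃! r : ℝ, r ∈ Set.Ioo (0 : ℝ) 1 ∧
      2 * q ^ 2 * r ^ 3 + (2 * q * n - q ^ 2) * r ^ 2 - α * m ^ 2 = 0 ∧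
      m / r ≤ n + (r - 1) * q := by
  set s := Real.sqrt (α + 1)
  have hs_sq : s ^ 2 = α + 1 := Real.sq_sqrt (by linarith)
  have hs1 : 1 ≤ s := Real.one_le_sqrt.2 (by linarith)
  have hs2 : s ≤ 2 := by nlinarith
  have hq0 : 0 < q := pos_of_neg_add_sqrt_lt (by positivity) hq1
  have hqn : q < n := lt_of_upper_threshold hs1 hs2 hm0.le hmn hq2
  obtain ⟨r, hr, hroot⟩ := exists_cubic_root_mem_Ioo (a := 2 * q ^ 2) (b := 2 * q * n - q ^ 2)
    (d := α * m ^ 2) (by positivity) (by linarith [lt_sq_add_of_neg_add_sqrt_lt hq1])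
  have hadm := admissibilityMargin_nonneg_of_root hq0 hqn.le hm0.le hs1 hs_sq
    (admissibilityMargin_pos_of_upper_threshold hq0 hm0 (by linarith) hq2) hr.1 hroot
  refine ⟨r, ⟨hr, hroot, (div_le_iff_admissibilityMargin_nonneg hr.1).2 hadm⟩, ?_⟩
  rintro y ⟨hy, hyroot, -⟩
  have hmono := strictMonoOn_cubic (a := 2 * q ^ 2) (b := 2 * q * n - q ^ 2) (d := α * m ^ 2)
    (by positivity) (by nlinarith)
  exact hmono.injOn hy.1.le hr.1.le (hyroot.trans hroot.symm)

/-- For `q₁ < q < q₂` there is a unique admissible volume fraction `r ∈ (0,1)`. -/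
theorem unique_volume_fraction
    (α n m q : ℝ)
    (hα0 : 0 < α) (hα1 : α ≤ 1) (hn : 0 < n) (hm0 : 0 < m) (hmn : m ≤ n)
    (hq1 : -n + Real.sqrt (n ^ 2 + α * m ^ 2) < q)
    (hq2 : q < (1 - 1 / Real.sqrt (α + 1)) * (n + (Real.sqrt (α + 1) - 1) * m)) :
    ∃! r : ℝ, r ∈ Set.Ioo (0 : ℝ) 1 ∧
      2 * q ^ 2 * r ^ 3 + (2 * q * n - q ^ 2) * r ^ 2 - α * m ^ 2 = 0 ∧
      m / r ≤ n + (r - 1) * q :=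
  unique_volume_fraction_general α n m q hα0 hα1 hm0 hmn hq1 hq2
end

section
/- Suppose α = 0, q > 0, and 0 ≤ M ≤ N. Then an admissible u is a global minimizer of ∫_Ω H_TF if and only if u₋₁(x) = 0 and u₁(x)² + u₀(x)² = n for almost every x ∈ Ω. -/
open MeasureTheory

noncomputable section

/-!
For `α = 0` and `n = N / |Ω|`, completing the square and using `u₁² + u₋₁² = (u₁² - u₋₁²) + 2u₋₁²`
gives the pointwise identity
`H_TF(u) = ½(|u|² - n)² + 2q u₋₁² + (n |u|² + q (u₁² - u₋₁²) - n²/2)`.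
The last bracket integrates to `nN/2 + qM` for every admissible `u`, while the first two terms are
nonnegative and vanish exactly when `u₋₁ = 0` and `u₁² + u₀² = n`. Such a `u` exists, namely the
constant `(√m, √(n - m), 0)`, because `0 ≤ m ≤ n`. Hence `nN/2 + qM` is the minimum energy, and it
is attained exactly when the nonnegative terms vanish almost everywhere.
-/

instance : ENNReal.HolderTriple 4 4 2 where
  inv_add_inv_eq_inv := by
    rw [← two_mul, show (4 : ENNReal) = 2 * 2 by norm_num, ENNReal.mul_inv (by simp) (by simp),
      ← mul_assoc, ENNReal.mul_inv_cancel (by simp) (by simp), one_mul]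

def excessTF (q n : ℝ) (v : Fin 3 → ℝ) : ℝ :=
  (1/2) * (v 0 ^ 2 + v 1 ^ 2 + v 2 ^ 2 - n) ^ 2 + 2 * q * v 2 ^ 2

lemma HTF_zero_eq_excessTF_add (q n : ℝ) (v : Fin 3 → ℝ) :
    HTF 0 q v = excessTF q n v
      + (n * (v 0 ^ 2 + v 1 ^ 2 + v 2 ^ 2) + q * (v 0 ^ 2 - v 2 ^ 2) - n ^ 2 / 2) := by
  simp only [HTF, excessTF]
  ring

lemma excessTF_nonneg {q : ℝ} (hq : 0 ≤ q) (n : ℝ) (v : Fin 3 → ℝ) : 0 ≤ excessTF q n v := by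
  unfold excessTF
  positivity

lemma excessTF_eq_zero_iff {q : ℝ} (hq : 0 < q) (n : ℝ) (v : Fin 3 → ℝ) :
    excessTF q n v = 0 ↔ v 2 = 0 ∧ v 0 ^ 2 + v 1 ^ 2 = n := by
  unfold excessTF
  rw [add_eq_zero_iff_of_nonneg (by positivity) (by positivity)]
  simp only [mul_eq_zero, pow_eq_zero_iff two_ne_zero, hq.ne', one_div, inv_eq_zero, two_ne_zero,
    false_or, sub_eq_zero]
  constructor <;> rintro ⟨h1, h2⟩ <;> simp_all

section Integrability

variable {X : Type*} [MeasurableSpace X] {μ : Measure X} {w : X → Fin 3 → ℝ}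

lemma MeasureTheory.MemLp.sq_apply (hw : MemLp w 4 μ) (i : Fin 3) :
    MemLp (fun x => w x i ^ 2) 2 μ := by
  have hwi : MemLp (fun x => w x i) 4 μ :=
    hw.of_le ((continuous_apply i).comp_aestronglyMeasurable hw.1)
      (.of_forall fun x => norm_le_pi_norm (w x) i)
  simpa only [sq] using hwi.mul' hwi

variable [IsFiniteMeasure μ]

lemma MeasureTheory.MemLp.integrable_sq_apply (hw : MemLp w 4 μ) (i : Fin 3) :
    Integrable (fun x => w x i ^ 2) μ :=
  (hw.sq_apply i).integrable (by norm_num)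

lemma MeasureTheory.MemLp.integrable_excessTF (hw : MemLp w 4 μ) (q n : ℝ) :
    Integrable (fun x => excessTF q n (w x)) μ := by
  have hρ : MemLp (fun x => w x 0 ^ 2 + w x 1 ^ 2 + w x 2 ^ 2 - n) 2 μ :=
    (((hw.sq_apply 0).add (hw.sq_apply 1)).add (hw.sq_apply 2)).sub (memLp_const n)
  exact (hρ.integrable_sq.const_mul _).add ((hw.integrable_sq_apply 2).const_mul _)

end Integrability

lemma Admissible.integral_HTF_zero {Ω : Set E3} (hΩ : volume Ω ≠ ⊤) {q N M n : ℝ}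
    (hnN : n * volume.real Ω = N) {w : E3 → Fin 3 → ℝ} (hw : Admissible Ω N M w) :
    ∫ x in Ω, HTF 0 q (w x) = (∫ x in Ω, excessTF q n (w x)) + (n * N / 2 + q * M) := by
  have := isFiniteMeasure_restrict.mpr hΩ
  have hρ : Integrable (fun x => n * (w x 0 ^ 2 + w x 1 ^ 2 + w x 2 ^ 2)) (volume.restrict Ω) :=
    (((hw.memL4.integrable_sq_apply 0).add (hw.memL4.integrable_sq_apply 1)).add
      (hw.memL4.integrable_sq_apply 2)).const_mul n
  have hmag : Integrable (fun x => q * (w x 0 ^ 2 - w x 2 ^ 2)) (volume.restrict Ω) :=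
    ((hw.memL4.integrable_sq_apply 0).sub (hw.memL4.integrable_sq_apply 2)).const_mul q
  have hrest : Integrable (fun x => n * (w x 0 ^ 2 + w x 1 ^ 2 + w x 2 ^ 2)
      + q * (w x 0 ^ 2 - w x 2 ^ 2) - n ^ 2 / 2) (volume.restrict Ω) :=
    (hρ.fun_add hmag).sub (integrable_const _)
  have hconstraints : ∫ x in Ω, (n * (w x 0 ^ 2 + w x 1 ^ 2 + w x 2 ^ 2)
      + q * (w x 0 ^ 2 - w x 2 ^ 2) - n ^ 2 / 2) = n * N / 2 + q * M := by
    rw [integral_sub (hρ.fun_add hmag) (integrable_const _), integral_add hρ hmag,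
      integral_const_mul, integral_const_mul, hw.mass, hw.mag, setIntegral_const, smul_eq_mul, ← hnN]
    ring
  simp only [HTF_zero_eq_excessTF_add q n]
  rw [integral_add (hw.memL4.integrable_excessTF q n) hrest, hconstraints]

lemma admissible_const {Ω : Set E3} (hΩ : volume Ω ≠ ⊤) {N M n m : ℝ} (hm : 0 ≤ m) (hmn : m ≤ n)
    (hnN : n * volume.real Ω = N) (hmM : m * volume.real Ω = M) :
    Admissible Ω N M (fun _ => ![Real.sqrt m, Real.sqrt (n - m), 0]) where
  memL4 := have := isFiniteMeasure_restrict.mpr hΩ; memLp_const _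
  nonneg := .of_forall fun _ i => by fin_cases i <;> simp [Real.sqrt_nonneg]
  mass := by
    simp [Real.sq_sqrt hm, Real.sq_sqrt (sub_nonneg.mpr hmn), ← hnN, mul_comm]
  mag := by
    simp [Real.sq_sqrt hm, ← hmM, mul_comm]

lemma isMinimizer_zero_iff_ae_excessTF_eq_zero {Ω : Set E3} (hΩ : volume Ω ≠ ⊤) {q N M n : ℝ}
    (hq : 0 ≤ q) (hnN : n * volume.real Ω = N)
    (hex : ∃ v, Admissible Ω N M v ∧ ∀ x, excessTF q n (v x) = 0)
    {u : E3 → Fin 3 → ℝ} (hu : Admissible Ω N M u) :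
    IsMinimizer Ω 0 q N M u ↔ ∀ᵐ x ∂(volume.restrict Ω), excessTF q n (u x) = 0 := by
  have := isFiniteMeasure_restrict.mpr hΩ
  have hE {w} (hw : Admissible Ω N M w) := hw.integral_HTF_zero (q := q) hΩ hnN
  have hpos (w : E3 → Fin 3 → ℝ) : 0 ≤ ∫ x in Ω, excessTF q n (w x) :=
    integral_nonneg fun x => excessTF_nonneg hq n (w x)
  obtain ⟨v, hv, hv0⟩ := hex
  have hiff : ∫ x in Ω, excessTF q n (u x) = 0 ↔
      ∀ᵐ x ∂(volume.restrict Ω), excessTF q n (u x) = 0 :=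
    integral_eq_zero_iff_of_nonneg (fun x => excessTF_nonneg hq n (u x))
      (hu.memL4.integrable_excessTF q n)
  rw [← hiff]
  constructor
  · rintro ⟨-, hmin⟩
    have := hmin v hv
    simp only [hE hu, hE hv, hv0, integral_zero] at this
    linarith [hpos u]
  · intro hu0
    refine ⟨hu, fun w hw => ?_⟩
    rw [hE hu, hE hw, hu0]
    linarith [hpos w]

theorem alpha0_qpos_general
    (Ω : Set E3) (hΩb : Bornology.IsBounded Ω)
    (hΩpos : 0 < volume Ω)
    (α q N M n m : ℝ)
    (hn : n = N / (volume Ω).toReal) (hm : m = M / (volume Ω).toReal)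
    (hα : α = 0) (hq : 0 < q) (hM0 : 0 ≤ M) (hMN : M ≤ N)
    (u : E3 → Fin 3 → ℝ) (hu : Admissible Ω N M u) :
    IsMinimizer Ω α q N M u ↔
      ∀ᵐ x ∂(volume.restrict Ω), u x 2 = 0 ∧ u x 0 ^ 2 + u x 1 ^ 2 = n := by
  subst hα
  have hΩ : volume Ω ≠ ⊤ := hΩb.measure_lt_top.ne
  have hvol : 0 < (volume Ω).toReal := ENNReal.toReal_pos hΩpos.ne' hΩ
  have hnN : n * volume.real Ω = N := by rw [measureReal_def, hn, div_mul_cancel₀ _ hvol.ne']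
  have hmM : m * volume.real Ω = M := by rw [measureReal_def, hm, div_mul_cancel₀ _ hvol.ne']
  have hm0 : 0 ≤ m := hm ▸ div_nonneg hM0 hvol.le
  have hmn : m ≤ n := by rw [hm, hn]; gcongr
  have hex : ∃ v, Admissible Ω N M v ∧ ∀ x, excessTF q n (v x) = 0 :=
    ⟨_, admissible_const hΩ hm0 hmn hnN hmM, fun _ => (excessTF_eq_zero_iff hq n _).mpr
      (by simp [Real.sq_sqrt hm0, Real.sq_sqrt (sub_nonneg.mpr hmn)])⟩
  rw [isMinimizer_zero_iff_ae_excessTF_eq_zero hΩ hq.le hnN hex hu]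
  simp only [excessTF_eq_zero_iff hq]

/-- `α = 0`, `q > 0`: minimizers are exactly the functions with `u₋₁ = 0` and `u₁² + u₀² = n` a.e. -/
theorem alpha0_qpos
    (Ω : Set E3) (hΩm : MeasurableSet Ω) (hΩb : Bornology.IsBounded Ω)
    (hΩpos : 0 < volume Ω)
    (α q N M n m : ℝ)
    (hN : 0 < N)
    (hn : n = N / (volume Ω).toReal) (hm : m = M / (volume Ω).toReal)
    (hα : α = 0) (hq : 0 < q) (hM0 : 0 ≤ M) (hMN : M ≤ N)
    (u : E3 → Fin 3 → ℝ) (hu : Admissible Ω N M u) :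
    IsMinimizer Ω α q N M u ↔
      ∀ᵐ x ∂(volume.restrict Ω), u x 2 = 0 ∧ u x 0 ^ 2 + u x 1 ^ 2 = n :=
  alpha0_qpos_general Ω hΩb hΩpos α q N M n m hn hm hα hq hM0 hMN u hu
end
end

section
/- For every real α with 0 < α ≤ 1 and all real numbers x and y, one has (1 + α − (1+α)^(1/2))·x² + (1 + α − (1−α)/(1+α)^(1/2))·y² − 2α·x·y ≥ 0. -/
/-! Put `s = √(1 + α) > 1`, so that `α = s² - 1` and `1 - α = 2 - s²`. The form is then
`a x² + c y² - 2 b x y` with `a = s² - s > 0`, `b = s² - 1` and `c = s² - (2 - s²) / s`, and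
`a c - b² = (s - 1)²`, so its discriminant is nonpositive. -/

theorem quadratic_nonneg_of_sq_le_mul {a b c : ℝ} (ha : 0 < a) (hdisc : b ^ 2 ≤ a * c) (x y : ℝ) :
    0 ≤ a * x ^ 2 + c * y ^ 2 - 2 * b * x * y := by
  have h : a * (a * x ^ 2 + c * y ^ 2 - 2 * b * x * y)
      = (a * x - b * y) ^ 2 + (a * c - b ^ 2) * y ^ 2 := by ring
  refine nonneg_of_mul_nonneg_right ?_ ha
  rw [h]
  have : 0 ≤ a * c - b ^ 2 := sub_nonneg.2 hdisc
  positivity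

theorem sq_sub_self_mul_sq_sub_two_sub_sq_div {s : ℝ} (hs : s ≠ 0) :
    (s ^ 2 - s) * (s ^ 2 - (2 - s ^ 2) / s) = (s ^ 2 - 1) ^ 2 + (s - 1) ^ 2 := by
  field_simp
  ring

theorem quadratic_form_nonneg_general (α x y : ℝ) (hα0 : 0 < α) :
    0 ≤ (1 + α - Real.sqrt (1 + α)) * x ^ 2
        + (1 + α - (1 - α) / Real.sqrt (1 + α)) * y ^ 2 - 2 * α * x * y := by
  set s := Real.sqrt (1 + α)
  have hs_sq : s ^ 2 = 1 + α := Real.sq_sqrt (by linarith)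
  have hs_one : 1 < s := Real.lt_sqrt_of_sq_lt (by linarith)
  obtain ⟨h1, h2, h3⟩ : 1 + α = s ^ 2 ∧ 1 - α = 2 - s ^ 2 ∧ α = s ^ 2 - 1 := by
    refine ⟨?_, ?_, ?_⟩ <;> linarith
  rw [h1, h2, h3]
  refine quadratic_nonneg_of_sq_le_mul (by nlinarith) ?_ x y
  rw [sq_sub_self_mul_sq_sub_two_sub_sq_div (by positivity)]
  exact le_add_of_nonneg_right (sq_nonneg _)

/-- The quadratic form appearing in the `NS+MS` analysis is nonnegative. -/
theorem quadratic_form_nonneg (α x y : ℝ) (hα0 : 0 < α) (hα1 : α ≤ 1) :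
    0 ≤ (1 + α - Real.sqrt (1 + α)) * x ^ 2
        + (1 + α - (1 - α) / Real.sqrt (1 + α)) * y ^ 2 - 2 * α * x * y :=
  quadratic_form_nonneg_general α x y hα0
end

section
/- Let 0 < α ≤ 1, A > 0, B > 0, and set k₁ := A/√(A² + α·B²) and k₂ := B/√(A² + α·B²). Then the quadratic form Q(x,y) := (α + 1 − k₁ − α·k₂)·x² + (α + 1 − k₁ + α·k₂)·y² − 2α·x·y is positive definite: Q(x,y) ≥ 0 for all real x, y, with equality only when x = y = 0. -/
/-!
Write `c = k₁`, `d = k₂`, so that `c² + α d² = 1`. The form has matrix `[[a, -α], [-α, b]]` with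
`a, b = α + 1 - c ∓ α d`; its trace is `2 (α + 1 - c)` and, using `α² d² = α (1 - c²)`, its
determinant simplifies to `(1 + α) (1 - c)²`. Both are positive because `c² < 1`.
-/

theorem binary_quadForm_posDef {a b h : ℝ} (htr : 0 < a + b) (hdet : h ^ 2 < a * b) :
    (∀ x y : ℝ, 0 ≤ a * x ^ 2 + b * y ^ 2 - 2 * h * x * y) ∧
    (∀ x y : ℝ, a * x ^ 2 + b * y ^ 2 - 2 * h * x * y = 0 → x = 0 ∧ y = 0) := by
  have ha : 0 < a := by nlinarith [sq_nonneg h]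
  have hD : 0 < a * b - h ^ 2 := sub_pos.mpr hdet
  have hsq : ∀ x y : ℝ, a * (a * x ^ 2 + b * y ^ 2 - 2 * h * x * y) =
      (a * x - h * y) ^ 2 + (a * b - h ^ 2) * y ^ 2 := fun x y => by ring
  refine ⟨fun x y => ?_, fun x y hQ => ?_⟩
  · refine nonneg_of_mul_nonneg_right ?_ ha
    rw [hsq]
    positivity
  · have hsum := hsq x y
    rw [hQ, mul_zero] at hsum
    obtain ⟨hx, hy⟩ := (add_eq_zero_iff_of_nonneg (sq_nonneg _) (by positivity)).mp hsum.symm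
    obtain rfl : y = 0 :=
      pow_eq_zero_iff two_ne_zero |>.mp ((mul_eq_zero.mp hy).resolve_left hD.ne')
    have hx : a * x = 0 := by simpa using hx
    exact ⟨(mul_eq_zero.mp hx).resolve_left ha.ne', rfl⟩

theorem div_sqrt_sq_add_mul_div_sqrt_sq {p q α : ℝ} (hpos : 0 < p ^ 2 + α * q ^ 2) :
    (p / √(p ^ 2 + α * q ^ 2)) ^ 2 + α * (q / √(p ^ 2 + α * q ^ 2)) ^ 2 = 1 := by
  rw [div_pow, div_pow, Real.sq_sqrt hpos.le, mul_div_assoc', ← add_div, div_self hpos.ne']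

theorem det_eq_of_sq_add_mul_sq_eq_one {α c d : ℝ} (h : c ^ 2 + α * d ^ 2 = 1) :
    (α + 1 - c - α * d) * (α + 1 - c + α * d) - α ^ 2 = (1 + α) * (1 - c) ^ 2 := by
  linear_combination (-α) * h

theorem quadratic_form_posdef_general (α A B k₁ k₂ : ℝ)
    (hα0 : 0 < α) (hB : 0 < B)
    (hk₁ : k₁ = A / Real.sqrt (A ^ 2 + α * B ^ 2))
    (hk₂ : k₂ = B / Real.sqrt (A ^ 2 + α * B ^ 2)) :
    (∀ x y : ℝ,
      0 ≤ (α + 1 - k₁ - α * k₂) * x ^ 2 + (α + 1 - k₁ + α * k₂) * y ^ 2 - 2 * α * x * y) ∧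
    (∀ x y : ℝ,
      (α + 1 - k₁ - α * k₂) * x ^ 2 + (α + 1 - k₁ + α * k₂) * y ^ 2 - 2 * α * x * y = 0 →
        x = 0 ∧ y = 0) := by
  have hpos : 0 < A ^ 2 + α * B ^ 2 := by positivity
  have hnorm : k₁ ^ 2 + α * k₂ ^ 2 = 1 := hk₁ ▸ hk₂ ▸ div_sqrt_sq_add_mul_div_sqrt_sq hpos
  have hk₂pos : 0 < k₂ := by rw [hk₂]; positivity
  have hk₁lt : k₁ < 1 := by
    have : k₁ ^ 2 < 1 := by nlinarith [mul_pos hα0 (pow_pos hk₂pos 2)]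
    exact (abs_lt.mp ((sq_lt_one_iff_abs_lt_one k₁).mp this)).2
  apply binary_quadForm_posDef
  · linarith
  · have hdet := det_eq_of_sq_add_mul_sq_eq_one hnorm
    have : 0 < 1 - k₁ := by linarith
    nlinarith [mul_pos (by linarith : (0 : ℝ) < 1 + α) (pow_pos this 2)]

/-- The quadratic form appearing in the `2C` analysis is positive definite. -/
theorem quadratic_form_posdef (α A B k₁ k₂ : ℝ)
    (hα0 : 0 < α) (hα1 : α ≤ 1) (hA : 0 < A) (hB : 0 < B)
    (hk₁ : k₁ = A / Real.sqrt (A ^ 2 + α * B ^ 2))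
    (hk₂ : k₂ = B / Real.sqrt (A ^ 2 + α * B ^ 2)) :
    (∀ x y : ℝ,
      0 ≤ (α + 1 - k₁ - α * k₂) * x ^ 2 + (α + 1 - k₁ + α * k₂) * y ^ 2 - 2 * α * x * y) ∧
    (∀ x y : ℝ,
      (α + 1 - k₁ - α * k₂) * x ^ 2 + (α + 1 - k₁ + α * k₂) * y ^ 2 - 2 * α * x * y = 0 →
        x = 0 ∧ y = 0) :=
  quadratic_form_posdef_general α A B k₁ k₂ hα0 hB hk₁ hk₂
end

section
/- Let W be an admissible double-well potential with wells a, b and fix ξ₀ ∈ [0,∞)³. Then the function φ(ξ) := g(ξ₀, ξ) is locally Lipschitz continuous on [0,∞)³, and for almost every ξ in the open positive orthant (0,∞)³ the function φ is differentiable at ξ with |∇φ(ξ)| = √(W(ξ)). -/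
open MeasureTheory Filter

noncomputable section

/-- The nonnegative orthant `[0,∞)³`. -/
def Orthant : Set E3 := {u | ∀ i, 0 ≤ u i}

/-- `W` is an admissible double-well potential with wells `a, b ∈ [0,∞)³`. -/
structure DoubleWell (a b : E3) (W : E3 → ℝ) : Prop where
  wells_ne : a ≠ b
  wellA_mem : a ∈ Orthant
  wellB_mem : b ∈ Orthant
  nonneg : ∀ u, 0 ≤ W u
  smooth : ContDiff ℝ 1 W
  symm : ∀ (u : E3) (i : Fin 3), W (WithLp.toLp 2 (Function.update u i (-(u i)))) = W u
  zeros : ∀ u ∈ Orthant, (W u = 0 ↔ u = a ∨ u = b)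
  quadA : ∃ δ > (0 : ℝ), ∃ C > (0 : ℝ), ∀ u : E3, ‖u - a‖ < δ →
    C * ‖u - a‖ ^ 2 ≤ W u ∧ W u ≤ C⁻¹ * ‖u - a‖ ^ 2
  quadB : ∃ δ > (0 : ℝ), ∃ C > (0 : ℝ), ∀ u : E3, ‖u - b‖ < δ →
    C * ‖u - b‖ ^ 2 ≤ W u ∧ W u ≤ C⁻¹ * ‖u - b‖ ^ 2
  growth : ∃ C' > (0 : ℝ), ∃ R > (0 : ℝ), ∀ u : E3, ‖u‖ > R → C' * ‖u‖ ^ 2 ≤ W u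

/-- `γ` is an admissible Lipschitz curve from `ξ₀` to `ξ₁` inside the orthant. -/
def IsCurve (ξ₀ ξ₁ : E3) (γ : ℝ → E3) : Prop :=
  (∃ K, LipschitzWith K γ) ∧ (∀ t ∈ Set.Icc (0 : ℝ) 1, γ t ∈ Orthant) ∧
    γ 0 = ξ₀ ∧ γ 1 = ξ₁

/-- The degenerate-length of a curve with respect to the conformal metric `W ds²`. -/
def curveEnergy (W : E3 → ℝ) (γ : ℝ → E3) : ℝ :=
  ∫ t in (0 : ℝ)..1, Real.sqrt (W (γ t)) * ‖deriv γ t‖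

/-- The degenerate geodesic distance induced by `W` on the orthant. -/
def geoDist (W : E3 → ℝ) (ξ₀ ξ₁ : E3) : ℝ :=
  sInf (curveEnergy W '' {γ | IsCurve ξ₀ ξ₁ γ})

/-!
Concatenating a near-optimal curve to `η` with the segment `[η, ξ]` gives
`φ ξ ≤ φ η + (sup_{[η, ξ]} √W) ‖ξ - η‖`, so `φ` is locally Lipschitz, hence differentiable a.e.
by Rademacher's theorem, and `‖∇φ ξ‖ ≤ √(W ξ)` wherever it is differentiable. Conversely, a
near-optimal curve from `ξ₀` to `ξ` leaves the sphere `‖u - ξ‖ = r` for the last time at some `η`,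
and its remaining part costs at least `(√(W ξ) - o(1)) r`; hence `φ η ≤ φ ξ - (√(W ξ) - o(1)) r`,
and differentiability at `ξ` forces `‖∇φ ξ‖ ≥ √(W ξ)`.
-/

open Set Topology

section LipschitzCurve

variable {F : Type*} [NormedAddCommGroup F] [NormedSpace ℝ F]

lemma deriv_comp_mul_add (γ : ℝ → F) (c d t : ℝ) :
    deriv (fun s => γ (c * s + d)) t = c • deriv γ (c * t + d) := by
  rw [← deriv_comp_add_const]
  exact deriv_comp_mul_left c (fun s => γ (s + d)) t

lemma LipschitzWith.intervalIntegrable_norm_deriv [CompleteSpace F] {K : NNReal} {γ : ℝ → F}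
    (hγ : LipschitzWith K γ) (a b : ℝ) : IntervalIntegrable (fun t => ‖deriv γ t‖) volume a b :=
  (intervalIntegrable_const (c := (K : ℝ))).mono_fun'
    (aestronglyMeasurable_deriv γ _).norm
    (ae_of_all _ fun t => by simpa using norm_deriv_le_of_lipschitz hγ)

/-- Testing `γ d - γ c` against a norming functional reduces the claim to the fundamental theorem
of calculus for the real Lipschitz function `g ∘ γ`. -/
lemma LipschitzWith.norm_sub_le_integral_norm_deriv [FiniteDimensional ℝ F] {K : NNReal} {γ : ℝ → F}
    (hγ : LipschitzWith K γ) {c d : ℝ} (hcd : c ≤ d) :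
    ‖γ d - γ c‖ ≤ ∫ t in c..d, ‖deriv γ t‖ := by
  obtain ⟨g, hg, hgγ⟩ := exists_dual_vector'' ℝ (γ d - γ c)
  have hgγL : LipschitzWith (‖g‖₊ * K) (g ∘ γ) := g.lipschitz.comp hγ
  have hderiv : ∀ᵐ t, deriv (g ∘ γ) t ≤ ‖deriv γ t‖ := by
    filter_upwards [hγ.ae_differentiableAt] with t ht
    rw [(g.hasFDerivAt.comp_hasDerivAt t ht.hasDerivAt).deriv]
    exact (le_abs_self _).trans ((g.le_opNorm _).trans (mul_le_of_le_one_left (norm_nonneg _) hg))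
  calc ‖γ d - γ c‖ = (g ∘ γ) d - (g ∘ γ) c := by simp [← map_sub, hgγ]
    _ = ∫ t in c..d, deriv (g ∘ γ) t :=
      (hgγL.lipschitzOnWith.absolutelyContinuousOnInterval.integral_deriv_eq_sub).symm
    _ ≤ ∫ t in c..d, ‖deriv γ t‖ :=
      intervalIntegral.integral_mono_ae hcd
        hgγL.lipschitzOnWith.absolutelyContinuousOnInterval.intervalIntegrable_deriv
        (hγ.intervalIntegrable_norm_deriv c d) hderiv

end LipschitzCurve

section Reparametrization

variable {X : Type*} [PseudoMetricSpace X]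

lemma LipschitzWith.comp_mul_add {K : NNReal} {γ : ℝ → X} (hγ : LipschitzWith K γ) (c d : ℝ) :
    LipschitzWith (K * ‖c‖₊) (fun t => γ (c * t + d)) :=
  LipschitzWith.of_dist_le_mul fun s t => by
    calc dist (γ (c * s + d)) (γ (c * t + d)) ≤ K * dist (c * s + d) (c * t + d) :=
          hγ.dist_le_mul _ _
      _ = K * ‖c‖₊ * dist s t := by
          rw [Real.dist_eq, Real.dist_eq, add_sub_add_right_eq_sub, ← mul_sub, abs_mul, coe_nnnorm,
            Real.norm_eq_abs, mul_assoc]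

lemma LipschitzWith.ite_le {f g : ℝ → X} {K : NNReal} {c : ℝ} (hf : LipschitzWith K f)
    (hg : LipschitzWith K g) (hfg : f c = g c) :
    LipschitzWith K (fun t => if t ≤ c then f t else g t) := by
  have across : ∀ s t, s ≤ c → c < t → dist (f s) (g t) ≤ K * dist s t := fun s t hs ht =>
    calc dist (f s) (g t) ≤ dist (f s) (f c) + dist (g c) (g t) := hfg ▸ dist_triangle _ _ _
      _ ≤ K * dist s c + K * dist c t := add_le_add (hf.dist_le_mul _ _) (hg.dist_le_mul _ _)
      _ = K * dist s t := by
        simp only [Real.dist_eq, abs_of_nonpos (sub_nonpos.2 hs),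
          abs_of_nonpos (sub_nonpos.2 ht.le), abs_of_nonpos (sub_nonpos.2 (hs.trans ht.le))]
        ring
  refine LipschitzWith.of_dist_le_mul fun s t => ?_
  by_cases hs : s ≤ c <;> by_cases ht : t ≤ c <;> simp only [hs, ht, if_true, if_false]
  · exact hf.dist_le_mul s t
  · exact across s t hs (not_le.1 ht)
  · rw [dist_comm, dist_comm s]; exact across t s ht (not_le.1 hs)
  · exact hg.dist_le_mul s t

end Reparametrization

lemma exists_last_eq_of_le_of_lt {f : ℝ → ℝ} (hf : Continuous f) {a b r : ℝ} (hab : a ≤ b)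
    (ha : r ≤ f a) (hb : f b < r) : ∃ c ∈ Ico a b, f c = r ∧ ∀ t ∈ Ioc c b, f t < r := by
  set S := {t ∈ Icc a b | r ≤ f t}
  have hS : IsCompact S := isCompact_Icc.inter_right (isClosed_le continuous_const hf)
  have hcS : sSup S ∈ S := hS.sSup_mem ⟨a, ⟨le_rfl, hab⟩, ha⟩
  have hcb : sSup S < b := hcS.1.2.lt_of_ne fun h => (h ▸ hb).not_ge hcS.2
  have after : ∀ t ∈ Ioc (sSup S) b, f t < r := fun t ht =>
    lt_of_not_ge fun h => ht.1.not_ge (le_csSup hS.bddAbove ⟨⟨hcS.1.1.trans ht.1.le, ht.2⟩, h⟩)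
  refine ⟨sSup S, ⟨hcS.1.1, hcb⟩, le_antisymm ?_ hcS.2, after⟩
  refine le_on_closure (fun t ht => (after t ht).le) hf.continuousOn continuousOn_const ?_
  rw [closure_Ioc hcb.ne]
  exact left_mem_Icc.2 hcb.le

lemma LocallyLipschitzOn.ae_differentiableAt {E F : Type*} [NormedAddCommGroup E]
    [NormedSpace ℝ E] [FiniteDimensional ℝ E] [MeasurableSpace E] [BorelSpace E]
    [NormedAddCommGroup F] [NormedSpace ℝ F] [FiniteDimensional ℝ F] {μ : Measure E}
    [μ.IsAddHaarMeasure] {f : E → F} {s : Set E} (hs : IsOpen s) (hf : LocallyLipschitzOn s f) :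
    ∀ᵐ x ∂μ, x ∈ s → DifferentiableAt ℝ f x := by
  set D := {x | x ∈ s ∧ ¬DifferentiableAt ℝ f x}
  simp only [ae_iff, Classical.not_imp]
  refine measure_null_of_locally_null D fun x hx => ?_
  obtain ⟨K, t, ht, hK⟩ := hf hx.1
  rw [hs.nhdsWithin_eq hx.1] at ht
  refine ⟨D ∩ interior t, inter_mem_nhdsWithin _ (interior_mem_nhds.2 ht),
    measure_mono_null (t := {y | ¬(y ∈ interior t → DifferentiableWithinAt ℝ f (interior t) y)})
      (fun y hy => Classical.not_imp.2 ⟨hy.2, fun hdiff => hy.1.2 ?_⟩)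
      (ae_iff.1 ((hK.mono interior_subset).ae_differentiableWithinAt_of_mem (μ := μ)))⟩
  exact hdiff.differentiableAt (isOpen_interior.mem_nhds hy.2)

section Energy

variable {F : Type*} [NormedAddCommGroup F] [NormedSpace ℝ F] {W : F → ℝ} {γ σ : ℝ → F}
  {K : NNReal} {a b c d : ℝ}

def energyOn (W : F → ℝ) (γ : ℝ → F) (c d : ℝ) : ℝ :=
  ∫ t in c..d, Real.sqrt (W (γ t)) * ‖deriv γ t‖

lemma energyOn_nonneg (hcd : c ≤ d) : 0 ≤ energyOn W γ c d :=
  intervalIntegral.integral_nonneg hcd fun _ _ => by positivity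

lemma energyOn_comp_mul_add (hc : 0 ≤ c) (d : ℝ) :
    energyOn W (fun t => γ (c * t + d)) a b = energyOn W γ (c * a + d) (c * b + d) := by
  simp only [energyOn, deriv_comp_mul_add, norm_smul, Real.norm_eq_abs, abs_of_nonneg hc,
    mul_left_comm _ c, intervalIntegral.integral_const_mul]
  exact intervalIntegral.smul_integral_comp_mul_add
    (fun t => Real.sqrt (W (γ t)) * ‖deriv γ t‖) c d

lemma energyOn_congr (hab : a ≤ b) (h : EqOn γ σ (Ioo a b)) :
    energyOn W γ a b = energyOn W σ a b := by
  simp only [energyOn, intervalIntegral.integral_of_le hab, integral_Ioc_eq_integral_Ioo]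
  refine setIntegral_congr_fun measurableSet_Ioo fun t ht => ?_
  simp only [h ht, (h.eventuallyEq_of_mem (isOpen_Ioo.mem_nhds ht)).deriv_eq]

lemma LipschitzWith.intervalIntegrable_energy [CompleteSpace F] (hW : Continuous W)
    (hγ : LipschitzWith K γ) (a b : ℝ) :
    IntervalIntegrable (fun t => Real.sqrt (W (γ t)) * ‖deriv γ t‖) volume a b :=
  (hγ.intervalIntegrable_norm_deriv a b).continuousOn_mul
    (Real.continuous_sqrt.comp (hW.comp hγ.continuous)).continuousOn

lemma energyOn_add_energyOn [CompleteSpace F] (hW : Continuous W) (hγ : LipschitzWith K γ)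
    (a b c : ℝ) : energyOn W γ a b + energyOn W γ b c = energyOn W γ a c :=
  intervalIntegral.integral_add_adjacent_intervals (hγ.intervalIntegrable_energy hW a b)
    (hγ.intervalIntegrable_energy hW b c)

lemma energyOn_lineMap_le {x y : F} {M : ℝ} (hM : ∀ u ∈ segment ℝ x y, Real.sqrt (W u) ≤ M) :
    energyOn W (AffineMap.lineMap x y) 0 1 ≤ M * ‖y - x‖ := by
  have hbound : ∀ t ∈ uIoc (0 : ℝ) 1,
      ‖Real.sqrt (W (AffineMap.lineMap x y t)) * ‖deriv (AffineMap.lineMap x y) t‖‖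
        ≤ M * ‖y - x‖ := fun t ht => by
    rw [uIoc_of_le zero_le_one] at ht
    rw [AffineMap.hasDerivAt_lineMap.deriv, norm_mul, norm_norm, Real.norm_of_nonneg
      (Real.sqrt_nonneg _)]
    exact mul_le_mul_of_nonneg_right (hM _ (lineMap_mem_segment ℝ x y (Ioc_subset_Icc_self ht)))
      (norm_nonneg _)
  calc energyOn W (AffineMap.lineMap x y) 0 1 ≤ ‖energyOn W (AffineMap.lineMap x y) 0 1‖ :=
        Real.le_norm_self _
    _ ≤ M * ‖y - x‖ * |1 - 0| := intervalIntegral.norm_integral_le_of_norm_le_const hbound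
    _ = M * ‖y - x‖ := by norm_num

lemma mul_norm_sub_le_energyOn [FiniteDimensional ℝ F] (hW : Continuous W)
    (hγ : LipschitzWith K γ) (hcd : c ≤ d) {m : ℝ} (hm : 0 ≤ m)
    (hmW : ∀ t ∈ Icc c d, m ≤ Real.sqrt (W (γ t))) :
    m * ‖γ d - γ c‖ ≤ energyOn W γ c d :=
  calc m * ‖γ d - γ c‖ ≤ m * ∫ t in c..d, ‖deriv γ t‖ :=
        mul_le_mul_of_nonneg_left (hγ.norm_sub_le_integral_norm_deriv hcd) hm
    _ = ∫ t in c..d, m * ‖deriv γ t‖ := (intervalIntegral.integral_const_mul _ _).symm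
    _ ≤ energyOn W γ c d :=
      intervalIntegral.integral_mono_on hcd ((hγ.intervalIntegrable_norm_deriv c d).const_mul m)
        (hγ.intervalIntegrable_energy hW c d)
        fun t ht => mul_le_mul_of_nonneg_right (hmW t ht) (norm_nonneg _)

end Energy

section GeodesicDistance

variable {W : E3 → ℝ} {ξ₀ ξ₁ ξ₂ : E3} {γ γ₁ γ₂ : ℝ → E3}

lemma convex_orthant : Convex ℝ Orthant := fun _ hx _ hy _ _ hs ht _ i => by
  have := hx i; have := hy i
  simp only [PiLp.add_apply, PiLp.smul_apply, smul_eq_mul]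
  positivity

lemma isOpen_setOf_forall_pos : IsOpen {u : E3 | ∀ i, 0 < u i} := by
  simp only [ofPred_forall]
  exact isOpen_iInter_of_finite fun i => isOpen_lt continuous_const (by fun_prop)

lemma orthant_mem_nhds {ξ : E3} (hξ : ∀ i, 0 < ξ i) : Orthant ∈ 𝓝 ξ :=
  mem_of_superset (isOpen_setOf_forall_pos.mem_nhds hξ) fun _ hu i => (hu i).le

lemma isCurve_lineMap (h₀ : ξ₀ ∈ Orthant) (h₁ : ξ₁ ∈ Orthant) :
    IsCurve ξ₀ ξ₁ (AffineMap.lineMap ξ₀ ξ₁) :=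
  ⟨⟨_, lipschitzWith_lineMap ξ₀ ξ₁⟩,
    fun _ ht => convex_orthant.segment_subset h₀ h₁ (lineMap_mem_segment ℝ ξ₀ ξ₁ ht),
    AffineMap.lineMap_apply_zero _ _, AffineMap.lineMap_apply_one _ _⟩

lemma curveEnergy_eq_energyOn : curveEnergy W γ = energyOn W γ 0 1 := rfl

lemma geoDist_le_curveEnergy (h : IsCurve ξ₀ ξ₁ γ) : geoDist W ξ₀ ξ₁ ≤ curveEnergy W γ :=
  csInf_le ⟨0, by rintro _ ⟨σ, -, rfl⟩; exact energyOn_nonneg zero_le_one⟩ ⟨γ, h, rfl⟩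

lemma exists_isCurve_curveEnergy_lt (h₀ : ξ₀ ∈ Orthant) (h₁ : ξ₁ ∈ Orthant) {r : ℝ}
    (hr : geoDist W ξ₀ ξ₁ < r) : ∃ γ, IsCurve ξ₀ ξ₁ γ ∧ curveEnergy W γ < r := by
  obtain ⟨_, ⟨γ, hγ, rfl⟩, hlt⟩ :=
    exists_lt_of_csInf_lt (s := curveEnergy W '' {γ | IsCurve ξ₀ ξ₁ γ})
      ⟨_, _, isCurve_lineMap h₀ h₁, rfl⟩ hr
  exact ⟨γ, hγ, hlt⟩

lemma geoDist_le_mul_norm_sub (h₀ : ξ₀ ∈ Orthant) (h₁ : ξ₁ ∈ Orthant) {M : ℝ}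
    (hM : ∀ u ∈ segment ℝ ξ₀ ξ₁, Real.sqrt (W u) ≤ M) : geoDist W ξ₀ ξ₁ ≤ M * ‖ξ₁ - ξ₀‖ :=
  (geoDist_le_curveEnergy (isCurve_lineMap h₀ h₁)).trans (energyOn_lineMap_le hM)

lemma geoDist_le_energyOn {K : NNReal} (hγ : LipschitzWith K γ) {c d : ℝ} (hcd : c ≤ d)
    (hγO : ∀ t ∈ Icc c d, γ t ∈ Orthant) : geoDist W (γ c) (γ d) ≤ energyOn W γ c d := by
  have hcurve : IsCurve (γ c) (γ d) (fun s => γ ((d - c) * s + c)) := by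
    refine ⟨⟨_, hγ.comp_mul_add _ _⟩, fun s hs => hγO _ ⟨?_, ?_⟩, by simp, by simp⟩ <;>
      nlinarith [hs.1, hs.2]
  calc geoDist W (γ c) (γ d) ≤ energyOn W (fun s => γ ((d - c) * s + c)) 0 1 :=
        geoDist_le_curveEnergy hcurve
    _ = energyOn W γ c d := by rw [energyOn_comp_mul_add (sub_nonneg.2 hcd)]; ring_nf

def concatCurve (γ₁ γ₂ : ℝ → E3) (t : ℝ) : E3 :=
  if t ≤ 1 / 2 then γ₁ (2 * t) else γ₂ (2 * t - 1)

lemma IsCurve.concat (h₁ : IsCurve ξ₀ ξ₁ γ₁) (h₂ : IsCurve ξ₁ ξ₂ γ₂) :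
    IsCurve ξ₀ ξ₂ (concatCurve γ₁ γ₂) := by
  obtain ⟨⟨K₁, hK₁⟩, hO₁, h₁0, h₁1⟩ := h₁
  obtain ⟨⟨K₂, hK₂⟩, hO₂, h₂0, h₂1⟩ := h₂
  have hL₁ : LipschitzWith (K₁ * 2) fun t => γ₁ (2 * t) := by
    simpa using hK₁.comp_mul_add 2 0
  have hL₂ : LipschitzWith (K₂ * 2) fun t => γ₂ (2 * t - 1) := by
    simpa [sub_eq_add_neg] using hK₂.comp_mul_add 2 (-1)
  refine ⟨⟨_, LipschitzWith.ite_le (hL₁.weaken le_sup_left) (hL₂.weaken le_sup_right) ?_⟩,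
    fun t ht => ?_, ?_, ?_⟩
  · norm_num [h₁1, h₂0]
  · unfold concatCurve
    split_ifs with h
    · exact hO₁ _ ⟨by linarith [ht.1], by linarith⟩
    · exact hO₂ _ ⟨by linarith, by linarith [ht.2]⟩
  · norm_num [concatCurve, h₁0]
  · norm_num [concatCurve, h₂1]

lemma curveEnergy_concat (hW : Continuous W) (h₁ : IsCurve ξ₀ ξ₁ γ₁) (h₂ : IsCurve ξ₁ ξ₂ γ₂) :
    curveEnergy W (concatCurve γ₁ γ₂) = curveEnergy W γ₁ + curveEnergy W γ₂ := by
  obtain ⟨K, hK⟩ := (h₁.concat h₂).1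
  have first : energyOn W (concatCurve γ₁ γ₂) 0 (1 / 2) = curveEnergy W γ₁ := by
    rw [energyOn_congr (by norm_num) (σ := fun t => γ₁ (2 * t + 0)),
      energyOn_comp_mul_add zero_le_two]
    · norm_num [curveEnergy_eq_energyOn]
    · intro t ht
      simp only [concatCurve, if_pos ht.2.le, add_zero]
  have second : energyOn W (concatCurve γ₁ γ₂) (1 / 2) 1 = curveEnergy W γ₂ := by
    rw [energyOn_congr (by norm_num) (σ := fun t => γ₂ (2 * t + -1)),
      energyOn_comp_mul_add zero_le_two]
    · norm_num [curveEnergy_eq_energyOn]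
    · intro t ht
      simp only [concatCurve, if_neg (not_le.2 ht.1), sub_eq_add_neg]
  rw [curveEnergy_eq_energyOn, ← energyOn_add_energyOn hW hK 0 (1 / 2) 1]
  exact congrArg₂ _ first second

lemma geoDist_triangle (hW : Continuous W) (h₀ : ξ₀ ∈ Orthant) (h₁ : ξ₁ ∈ Orthant)
    (h₂ : ξ₂ ∈ Orthant) : geoDist W ξ₀ ξ₂ ≤ geoDist W ξ₀ ξ₁ + geoDist W ξ₁ ξ₂ := by
  refine le_of_forall_pos_lt_add fun ε hε => ?_
  obtain ⟨γ₁, hγ₁, hE₁⟩ := exists_isCurve_curveEnergy_lt h₀ h₁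
    (lt_add_of_pos_right (geoDist W ξ₀ ξ₁) (half_pos hε))
  obtain ⟨γ₂, hγ₂, hE₂⟩ := exists_isCurve_curveEnergy_lt h₁ h₂
    (lt_add_of_pos_right (geoDist W ξ₁ ξ₂) (half_pos hε))
  calc geoDist W ξ₀ ξ₂ ≤ curveEnergy W (concatCurve γ₁ γ₂) :=
        geoDist_le_curveEnergy (hγ₁.concat hγ₂)
    _ = curveEnergy W γ₁ + curveEnergy W γ₂ := curveEnergy_concat hW hγ₁ hγ₂
    _ < geoDist W ξ₀ ξ₁ + geoDist W ξ₁ ξ₂ + ε := by linarith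

lemma geoDist_lipschitzOnWith (hW : Continuous W) (hξ₀ : ξ₀ ∈ Orthant) {s : Set E3}
    (hs : Convex ℝ s) (hsO : s ⊆ Orthant) {M : ℝ} (hM : ∀ u ∈ s, Real.sqrt (W u) ≤ M) :
    LipschitzOnWith M.toNNReal (geoDist W ξ₀) s :=
  LipschitzOnWith.of_le_add_mul' M fun x hx y hy =>
    calc geoDist W ξ₀ x ≤ geoDist W ξ₀ y + geoDist W y x :=
          geoDist_triangle hW hξ₀ (hsO hy) (hsO hx)
      _ ≤ geoDist W ξ₀ y + M * dist x y := by
          rw [dist_eq_norm]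
          exact add_le_add le_rfl (geoDist_le_mul_norm_sub (hsO hy) (hsO hx)
            fun u hu => hM u (hs.segment_subset hy hx hu))

lemma exists_lipschitzOnWith_geoDist_ball_inter (hW : Continuous W) (hξ₀ : ξ₀ ∈ Orthant)
    (ξ : E3) (ε : ℝ) : ∃ K, LipschitzOnWith K (geoDist W ξ₀) (Metric.ball ξ ε ∩ Orthant) := by
  obtain ⟨C, hC⟩ := (isCompact_closedBall ξ ε).exists_bound_of_continuousOn
    (Real.continuous_sqrt.comp hW).continuousOn
  exact ⟨_, geoDist_lipschitzOnWith hW hξ₀ ((convex_ball ξ ε).inter convex_orthant)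
    inter_subset_right fun u hu =>
      (Real.le_norm_self _).trans (hC u (Metric.ball_subset_closedBall hu.1))⟩

lemma locallyLipschitzOn_geoDist (hW : Continuous W) (hξ₀ : ξ₀ ∈ Orthant) :
    LocallyLipschitzOn Orthant (geoDist W ξ₀) := fun ξ _ =>
  let ⟨K, hK⟩ := exists_lipschitzOnWith_geoDist_ball_inter hW hξ₀ ξ 1
  ⟨K, _, inter_mem_nhdsWithin _ (Metric.ball_mem_nhds ξ one_pos), hK.mono (inter_comm _ _).subset⟩

end GeodesicDistance

section Eikonal

variable {W : E3 → ℝ} {ξ₀ ξ : E3}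

lemma exists_geoDist_add_mul_lt (hW : Continuous W) (hξ₀ : ξ₀ ∈ Orthant) (hξ : ξ ∈ Orthant)
    {r m ε : ℝ} (hr : 0 < r) (hrξ : r ≤ ‖ξ₀ - ξ‖) (hm : 0 ≤ m)
    (hmW : ∀ u ∈ Metric.closedBall ξ r, m ≤ Real.sqrt (W u)) (hε : 0 < ε) :
    ∃ η, ‖η - ξ‖ = r ∧ geoDist W ξ₀ η + m * r < geoDist W ξ₀ ξ + ε := by
  obtain ⟨γ, ⟨⟨K, hK⟩, hγO, hγ0, hγ1⟩, hE⟩ :=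
    exists_isCurve_curveEnergy_lt (W := W) hξ₀ hξ (lt_add_of_pos_right _ hε)
  obtain ⟨c, hc, hcr, after⟩ := exists_last_eq_of_le_of_lt (f := fun t => ‖γ t - ξ‖) (r := r)
    (hK.continuous.sub continuous_const).norm zero_le_one (by rwa [hγ0])
    (by simpa [hγ1] using hr)
  have head : geoDist W ξ₀ (γ c) ≤ energyOn W γ 0 c :=
    hγ0 ▸ geoDist_le_energyOn hK hc.1 fun t ht => hγO t ⟨ht.1, ht.2.trans hc.2.le⟩
  have tail : m * r ≤ energyOn W γ c 1 := by
    have hcurve : m * ‖γ 1 - γ c‖ ≤ energyOn W γ c 1 := by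
      refine mul_norm_sub_le_energyOn hW hK hc.2.le hm fun t ht => hmW _ ?_
      rw [Metric.mem_closedBall, dist_eq_norm]
      rcases ht.1.eq_or_lt with rfl | hct
      exacts [hcr.le, (after t ⟨hct, ht.2⟩).le]
    rwa [hγ1, norm_sub_rev, hcr] at hcurve
  have split := energyOn_add_energyOn hW hK 0 c 1
  exact ⟨γ c, hcr, by rw [curveEnergy_eq_energyOn] at hE; linarith⟩

lemma sqrt_le_norm_of_hasFDerivAt_geoDist (hW : Continuous W) (hξ₀ : ξ₀ ∈ Orthant)
    (hξ : ξ ∈ Orthant) (hne : ξ ≠ ξ₀) {L : E3 →L[ℝ] ℝ} (hL : HasFDerivAt (geoDist W ξ₀) L ξ) :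
    Real.sqrt (W ξ) ≤ ‖L‖ := by
  refine le_of_forall_pos_le_add fun ε hε => ?_
  obtain ⟨δ, hδ, rfl⟩ : ∃ δ, 0 < δ ∧ 3 * δ = ε := ⟨ε / 3, by positivity, by ring⟩
  rcases le_or_gt (Real.sqrt (W ξ)) δ with hsmall | hlarge
  · linarith [norm_nonneg L]
  have hnear : ∀ᶠ u in 𝓝 ξ, Real.sqrt (W ξ) - δ < Real.sqrt (W u) ∧
      ‖geoDist W ξ₀ u - geoDist W ξ₀ ξ - L (u - ξ)‖ ≤ δ * ‖u - ξ‖ :=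
    (continuousAt_const.eventually_lt (Real.continuous_sqrt.comp hW).continuousAt
      (sub_lt_self _ hδ)).and (hL.isLittleO.def hδ)
  obtain ⟨r₀, hr₀, hball⟩ := Metric.nhds_basis_closedBall.eventually_iff.1 hnear
  set r := min r₀ ‖ξ₀ - ξ‖
  have hr : 0 < r := lt_min hr₀ (norm_pos_iff.2 (sub_ne_zero.2 hne.symm))
  have hball' : ∀ u ∈ Metric.closedBall ξ r, _ := fun u hu =>
    hball (Metric.closedBall_subset_closedBall (min_le_left _ _) hu)
  obtain ⟨η, hηr, hη⟩ := exists_geoDist_add_mul_lt hW hξ₀ hξ hr (min_le_right _ _)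
    (sub_nonneg.2 hlarge.le) (fun u hu => (hball' u hu).1.le) (mul_pos hδ hr)
  have hηball : η ∈ Metric.closedBall ξ r := by rw [Metric.mem_closedBall, dist_eq_norm, hηr]
  have hdiff := (hball' η hηball).2
  have hLη := L.le_opNorm (η - ξ)
  rw [hηr, Real.norm_eq_abs] at hdiff hLη
  have hlt : Real.sqrt (W ξ) * r < (‖L‖ + 3 * δ) * r := by
    linarith [(abs_le.1 hdiff).1, (abs_le.1 hLη).1]
  exact (lt_of_mul_lt_mul_right hlt hr.le).le

lemma norm_fderiv_geoDist_le (hW : Continuous W) (hξ₀ : ξ₀ ∈ Orthant) (hξ : Orthant ∈ 𝓝 ξ) :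
    ‖fderiv ℝ (geoDist W ξ₀) ξ‖ ≤ Real.sqrt (W ξ) := by
  refine le_of_forall_pos_le_add fun δ hδ => ?_
  have hnear : ∀ᶠ u in 𝓝 ξ, u ∈ Orthant ∧ Real.sqrt (W u) < Real.sqrt (W ξ) + δ :=
    Filter.Eventually.and hξ ((Real.continuous_sqrt.comp hW).continuousAt.eventually_lt
      continuousAt_const (lt_add_of_pos_right _ hδ))
  obtain ⟨r, hr, hball⟩ := Metric.nhds_basis_ball.eventually_iff.1 hnear
  have hlip := geoDist_lipschitzOnWith hW hξ₀ (convex_ball ξ r) (fun u hu => (hball hu).1)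
    fun u hu => (hball hu).2.le
  calc ‖fderiv ℝ (geoDist W ξ₀) ξ‖ ≤ (Real.sqrt (W ξ) + δ).toNNReal :=
        norm_fderiv_le_of_lipschitzOn ℝ (Metric.ball_mem_nhds ξ hr) hlip
    _ = Real.sqrt (W ξ) + δ := Real.coe_toNNReal _ (by positivity)

lemma norm_fderiv_geoDist_eq (hW : Continuous W) (hξ₀ : ξ₀ ∈ Orthant) (hξ : Orthant ∈ 𝓝 ξ)
    (hne : ξ ≠ ξ₀) (hd : DifferentiableAt ℝ (geoDist W ξ₀) ξ) :
    ‖fderiv ℝ (geoDist W ξ₀) ξ‖ = Real.sqrt (W ξ) :=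
  (norm_fderiv_geoDist_le hW hξ₀ hξ).antisymm
    (sqrt_le_norm_of_hasFDerivAt_geoDist hW hξ₀ (mem_of_mem_nhds hξ) hne hd.hasFDerivAt)

end Eikonal

/-- The geodesic distance function `φ = g(ξ₀, ·)` is locally Lipschitz on the orthant and
satisfies the eikonal equation `|∇φ| = √W` a.e. on the open positive orthant. -/
theorem geoDist_locallyLipschitz_eikonal (a b : E3) (W : E3 → ℝ) (hW : DoubleWell a b W)
    (ξ₀ : E3) (hξ₀ : ξ₀ ∈ Orthant) :
    (∀ ξ ∈ Orthant, ∃ ε > (0 : ℝ), ∃ K : NNReal,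
      LipschitzOnWith K (fun ξ' => geoDist W ξ₀ ξ') (Metric.ball ξ ε ∩ Orthant)) ∧
    (∀ᵐ ξ ∂(volume.restrict {u : E3 | ∀ i, 0 < u i}),
      DifferentiableAt ℝ (fun ξ' => geoDist W ξ₀ ξ') ξ ∧
        ‖fderiv ℝ (fun ξ' => geoDist W ξ₀ ξ') ξ‖ = Real.sqrt (W ξ)) := by
  have hWc : Continuous W := hW.smooth.continuous
  refine ⟨fun ξ _ => ⟨1, one_pos, exists_lipschitzOnWith_geoDist_ball_inter hWc hξ₀ ξ 1⟩, ?_⟩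
  have hdiff := ((locallyLipschitzOn_geoDist hWc hξ₀).mono fun _ hu i => (hu i).le
    ).ae_differentiableAt (μ := volume) isOpen_setOf_forall_pos
  rw [ae_restrict_iff' isOpen_setOf_forall_pos.measurableSet]
  filter_upwards [hdiff, compl_mem_ae_iff.2 (measure_singleton ξ₀)] with ξ hd hne hξ
  exact ⟨hd hξ, norm_fderiv_geoDist_eq hWc hξ₀ (orthant_mem_nhds hξ) hne (hd hξ)⟩
end
end
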